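/- arXiv:1408.2667 — 6 statements merged into one kernel-verified Lean document; each statement's English description precedes it below -/
import Mathlib

section
/- Let H be a Hilbert space and S ∈ B(H) a proper isometry (S*S = 1 but SS* ≠ 1). Then the distance from S to the set {N + K : N normal, K compact} equals 1. -/
/-!
Suppose `‖S - (N + K)‖ < 1`. Shrinking the compact part to a finite-rank `F` keeps
`‖S - (N + F)‖ < 1`, and then `S† (N + F) = 1 - S† (S - (N + F))` is invertible, so
`T = N + F` is bounded below. On the finite-codimensional subspace `ker F` the normal operator `N`
agrees with `T`, so its range is closed, hence equal to `(ker N)ᗮ`; and `F` is injective on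
`ker N`, so that kernel is finite-dimensional. Thus `N + P` is invertible for the projection `P`
onto `ker N`, and writing `T = (N + P) (1 + R)` with `R` of finite rank, injectivity of `T` makes
`1 + R`, hence `T`, invertible: a finite-rank perturbation of a normal operator has index zero.
But then `S† = (S† T) T⁻¹` is invertible and `S` is unitary. The upper bound is `‖S - 0‖ ≤ 1`.
-/

open ContinuousLinearMap Function Metric

section LinearAlgebra

variable {K V W : Type*} [DivisionRing K] [AddCommGroup V] [Module K V] [AddCommGroup W]
  [Module K W]

theorem LinearMap.finiteDimensional_ker_of_injective_add {A F : V →ₗ[K] W}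
    [FiniteDimensional K F.range] (h : Injective (A + F)) : FiniteDimensional K A.ker := by
  refine FiniteDimensional.of_injective (F.restrict (p := A.ker) (q := F.range)
    fun x _ => F.mem_range_self x) fun v w hvw => Subtype.ext (h ?_)
  have hF : F v = F w := congrArg Subtype.val hvw
  rw [add_apply, add_apply, mem_ker.mp v.2, mem_ker.mp w.2, hF]

theorem LinearMap.surjective_one_add_of_injective {R : V →ₗ[K] V} [FiniteDimensional K R.range]
    (h : Injective ⇑(1 + R)) : Surjective ⇑(1 + R) := by
  let ψ : R.range →ₗ[K] R.range :=
    (1 + R).restrict fun v hv => R.range.add_mem hv (R.mem_range_self v)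
  have hψ : Surjective ψ := injective_iff_surjective.mp fun v w hvw =>
    Subtype.ext (h (congrArg Subtype.val hvw))
  intro y
  obtain ⟨v, hv⟩ := hψ (-⟨R y, R.mem_range_self y⟩)
  have hv' : (v : V) + R v = -R y := congrArg Subtype.val hv
  refine ⟨y + v, ?_⟩
  simp only [add_apply, Module.End.one_apply, map_add]
  rw [hv', add_neg_cancel_right]

end LinearAlgebra

theorem IsCompactOperator.exists_finiteDimensional_range_norm_sub_lt {𝕜 H : Type*} [RCLike 𝕜]
    [NormedAddCommGroup H] [InnerProductSpace 𝕜 H] {K : H →L[𝕜] H}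
    (hK : IsCompactOperator K) {ε : ℝ} (hε : 0 < ε) :
    ∃ F : H →L[𝕜] H, FiniteDimensional 𝕜 F.range ∧ ‖K - F‖ < ε := by
  obtain ⟨t, ht, hnet⟩ := Metric.totallyBounded_iff.mp
    (hK.isCompact_closure_image_closedBall 1).totallyBounded (ε / 2) (half_pos hε)
  let U := Submodule.span 𝕜 t
  have : FiniteDimensional 𝕜 U := FiniteDimensional.span_of_finite 𝕜 ht
  refine ⟨U.starProjection ∘L K, ?_, ?_⟩
  · refine Submodule.finiteDimensional_of_le (S₂ := U) ?_
    rintro _ ⟨x, rfl⟩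
    exact U.starProjection_apply_mem (K x)
  refine (opNorm_le_of_unit_norm (half_pos hε).le fun x hx => ?_).trans_lt (half_lt_self hε)
  obtain ⟨z, hz, hKz⟩ := Set.mem_iUnion₂.mp
    (hnet (subset_closure ⟨x, mem_closedBall_zero_iff.mpr hx.le, rfl⟩))
  calc ‖(K - U.starProjection ∘L K) x‖ = ‖K x - U.starProjection (K x)‖ := rfl
    _ ≤ ‖K x - z‖ := by
      rw [Submodule.starProjection_minimal]
      exact ciInf_le ⟨0, by rintro _ ⟨w, rfl⟩; positivity⟩ (⟨z, Submodule.subset_span hz⟩ : U)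
    _ ≤ ε / 2 := (mem_ball_iff_norm.mp hKz).le

theorem ContinuousLinearMap.isClosed_range_of_antilipschitz_add {𝕜 E F : Type*}
    [NontriviallyNormedField 𝕜] [CompleteSpace 𝕜] [NormedAddCommGroup E] [NormedSpace 𝕜 E]
    [CompleteSpace E] [NormedAddCommGroup F] [NormedSpace 𝕜 F] {A B : E →L[𝕜] F}
    [FiniteDimensional 𝕜 B.range] {c : NNReal} (hAB : AntilipschitzWith c (A + B)) :
    IsClosed (A.range : Set F) := by
  have : B.ker.CoFG := Submodule.range_fg_iff_ker_cofg.mp (Module.Finite.iff_fg.mp inferInstance)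
  refine LinearMap.isClosed_range_of_isClosed_map_of_finiteDimensional_quotient (s := B.ker) ?_
  have hEq : Set.EqOn A (A + B) B.ker := fun x hx => by simp [show B x = 0 from hx]
  rw [Submodule.map_coe, coe_coe, hEq.image_eq]
  exact (hAB.isClosedEmbedding (A + B).uniformContinuous).isClosedMap _ B.isClosed_ker

section Normal

variable {𝕜 H : Type*} [RCLike 𝕜] [NormedAddCommGroup H] [InnerProductSpace 𝕜 H]
  [CompleteSpace H] {N : H →L[𝕜] H}

theorem IsStarNormal.range_eq_orthogonal_ker (hN : IsStarNormal N)
    (hclosed : IsClosed (N.range : Set H)) : N.range = N.kerᗮ := by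
  have : CompleteSpace N.range := hclosed.completeSpace_coe
  rw [← hN.orthogonal_range, Submodule.orthogonal_orthogonal]

theorem IsStarNormal.isUnit_add_starProjection_ker (hN : IsStarNormal N)
    (hclosed : IsClosed (N.range : Set H)) : IsUnit (N + N.ker.starProjection) := by
  set P := N.ker.starProjection
  have hrange := hN.range_eq_orthogonal_ker hclosed
  have hNP : ∀ x, N (P x) = 0 := fun x => N.ker.starProjection_apply_mem x
  have hPP : ∀ x, P (P x) = P x := fun x =>
    Submodule.starProjection_eq_self_iff.mpr (N.ker.starProjection_apply_mem x)
  refine isUnit_iff_bijective.mpr ⟨(injective_iff_map_eq_zero _).mpr fun x hx => ?_, fun y => ?_⟩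
  · rw [add_apply] at hx
    have hNx : N x ∈ N.ker ⊓ N.kerᗮ := by
      refine ⟨?_, hrange ▸ N.mem_range_self x⟩
      rw [eq_neg_of_add_eq_zero_left hx]
      exact neg_mem (N.ker.starProjection_apply_mem x)
    rw [Submodule.inf_orthogonal_eq_bot, Submodule.mem_bot] at hNx
    rw [hNx, zero_add] at hx
    exact (Submodule.starProjection_eq_self_iff.mpr hNx).symm.trans hx
  · obtain ⟨x, hx⟩ : y - P y ∈ N.range := hrange ▸ N.ker.sub_starProjection_mem_orthogonal y
    refine ⟨x - P x + P y, ?_⟩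
    rw [coe_coe] at hx
    simp only [add_apply, map_add, map_sub, hNP, hPP, hx]
    abel

theorem IsStarNormal.isUnit_add_finiteRank_of_antilipschitz {F : H →L[𝕜] H}
    (hN : IsStarNormal N) [FiniteDimensional 𝕜 F.range] {c : NNReal}
    (hT : AntilipschitzWith c (N + F)) : IsUnit (N + F) := by
  obtain ⟨U, hU⟩ := hN.isUnit_add_starProjection_ker (isClosed_range_of_antilipschitz_add hT)
  set P := N.ker.starProjection
  set R := ↑U⁻¹ * (F - P)
  have : FiniteDimensional 𝕜 N.ker :=
    LinearMap.finiteDimensional_ker_of_injective_add (A := (N : H →ₗ[𝕜] H)) hT.injective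
  have : FiniteDimensional 𝕜 (R : H →ₗ[𝕜] H).range := by
    have hF : (F : H →ₗ[𝕜] H).HasFiniteRange := Module.Finite.iff_fg.mp ‹_›
    have hP : (P : H →ₗ[𝕜] H).HasFiniteRange := by
      rw [LinearMap.HasFiniteRange, Submodule.range_starProjection]
      exact Module.Finite.iff_fg.mp ‹_›
    exact Module.Finite.iff_fg.mpr ((hF.sub hP).comp_left ((↑U⁻¹ : H →L[𝕜] H) : H →ₗ[𝕜] H))
  have hfac : N + F = ↑U * (1 + R) := by
    rw [mul_add, mul_one, ← mul_assoc, Units.mul_inv, one_mul, hU]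
    abel
  have hinj : Injective ⇑(1 + (R : H →ₗ[𝕜] H)) := by
    have := hT.injective
    rw [hfac, mul_def, coe_comp] at this
    exact this.of_comp
  rw [hfac]
  exact U.isUnit.mul (isUnit_iff_bijective.mpr
    ⟨hinj, LinearMap.surjective_one_add_of_injective hinj⟩)

end Normal

section Isometry

variable {𝕜 H : Type*} [RCLike 𝕜] [NormedAddCommGroup H] [InnerProductSpace 𝕜 H]
  [CompleteSpace H] {S T : H →L[𝕜] H}

theorem norm_le_one_of_adjoint_comp_self_eq_one (hS : adjoint S ∘L S = 1) : ‖S‖ ≤ 1 :=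
  opNorm_le_bound S zero_le_one fun x => by
    rw [(norm_map_iff_adjoint_comp_self S).mpr hS x, one_mul]

theorem isUnit_adjoint_mul_of_norm_sub_lt_one (hS : adjoint S ∘L S = 1) (h : ‖S - T‖ < 1) :
    IsUnit (adjoint S * T) := by
  have hdecomp : adjoint S * T = 1 - adjoint S * (S - T) := by
    rw [mul_sub, mul_def (adjoint S) S, hS, sub_sub_cancel]
  rw [hdecomp]
  refine isUnit_one_sub_of_norm_lt_one ((norm_mul_le _ _).trans_lt ?_)
  calc ‖adjoint S‖ * ‖S - T‖ ≤ 1 * ‖S - T‖ := by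
        gcongr
        rw [adjoint.norm_map]
        exact norm_le_one_of_adjoint_comp_self_eq_one hS
    _ < 1 := by rwa [one_mul]

theorem one_le_norm_sub_add_of_isStarNormal (hS : adjoint S ∘L S = 1) (hS' : S ∘L adjoint S ≠ 1)
    {N K : H →L[𝕜] H} (hN : IsStarNormal N) (hK : IsCompactOperator K) :
    1 ≤ ‖S - (N + K)‖ := by
  by_contra! h
  obtain ⟨F, hF, hKF⟩ := hK.exists_finiteDimensional_range_norm_sub_lt (sub_pos.mpr h)
  have hNF : ‖S - (N + F)‖ < 1 := calc
    ‖S - (N + F)‖ = ‖(S - (N + K)) + (K - F)‖ := by congr 1; abel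
    _ ≤ ‖S - (N + K)‖ + ‖K - F‖ := norm_add_le _ _
    _ < 1 := by linarith
  obtain ⟨u, hu⟩ := isUnit_adjoint_mul_of_norm_sub_lt_one hS hNF
  let L : H →L[𝕜] H := ↑u⁻¹ * adjoint S
  have hleft : RightInverse (N + F) L := fun x => by
    show (L * (N + F)) x = x
    rw [mul_assoc, ← hu, Units.inv_mul, one_apply_eq_self]
  have hunit := hN.isUnit_add_finiteRank_of_antilipschitz (L.lipschitz.to_rightInverse hleft)
  obtain ⟨v, hv⟩ : IsUnit (adjoint S) := (Units.isUnit_mul_units _ hunit.unit).mp (hu ▸ u.isUnit)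
  have hSv : ↑v⁻¹ = S := Units.mul_eq_one_iff_inv_eq.mp (by rw [hv]; exact hS)
  apply hS'
  calc S ∘L adjoint S = ↑v⁻¹ * ↑v := by rw [hSv, hv]; rfl
    _ = 1 := v.inv_mul

end Isometry

/-- Halmos' lemma: a proper isometry on a Hilbert space has distance exactly 1
from the set of operators of the form "normal plus compact". -/
theorem halmos_dist_properIsometry_normal_plus_compact
    {H : Type*} [NormedAddCommGroup H] [InnerProductSpace ℂ H] [CompleteSpace H]
    (S : H →L[ℂ] H)
    (hiso : (ContinuousLinearMap.adjoint S).comp S = 1)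
    (hproper : S.comp (ContinuousLinearMap.adjoint S) ≠ 1) :
    Metric.infDist S
      {T : H →L[ℂ] H | ∃ N K : H →L[ℂ] H,
        (ContinuousLinearMap.adjoint N).comp N = N.comp (ContinuousLinearMap.adjoint N) ∧
        IsCompactOperator K ∧ T = N + K} = 1 := by
  have hzero : (0 : H →L[ℂ] H) ∈ {T : H →L[ℂ] H | ∃ N K : H →L[ℂ] H,
      (ContinuousLinearMap.adjoint N).comp N = N.comp (ContinuousLinearMap.adjoint N) ∧
      IsCompactOperator K ∧ T = N + K} := ⟨0, 0, by simp, isCompactOperator_zero, by simp⟩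
  refine le_antisymm ?_ ((le_infDist ⟨0, hzero⟩).mpr ?_)
  · calc infDist S _ ≤ dist S 0 := infDist_le_dist_of_mem hzero
      _ = ‖S‖ := dist_zero_right S
      _ ≤ 1 := norm_le_one_of_adjoint_comp_self_eq_one hiso
  · rintro _ ⟨N, K, hN, hK, rfl⟩
    rw [dist_eq_norm]
    exact one_le_norm_sub_add_of_isStarNormal hiso hproper ⟨hN⟩ hK
end

section
/- Let A be a C*-algebra, x ∈ A, and for each primitive ideal J of A define x̌(J) = ‖x + J‖, the norm of the image of x in A/J. Then x̌ : Prim(A) → ℝ≥0 is lower semicontinuous with respect to the Jacobson topology on Prim(A). -/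
/-- A representation of a C*-algebra `A` on a Hilbert space. -/
structure HilbertRep (A : Type) [NonUnitalNormedRing A] [StarRing A]
    [NormedSpace ℂ A] [IsScalarTower ℂ A A] [SMulCommClass ℂ A A] where
  carrier : Type
  [ng : NormedAddCommGroup carrier]
  [ip : InnerProductSpace ℂ carrier]
  [cs : CompleteSpace carrier]
  π : A →⋆ₙₐ[ℂ] (carrier →L[ℂ] carrier)

attribute [instance] HilbertRep.ng HilbertRep.ip HilbertRep.cs

variable {A : Type} [NonUnitalNormedRing A] [StarRing A] [CStarRing A]
  [NormedSpace ℂ A] [IsScalarTower ℂ A A] [SMulCommClass ℂ A A]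
  [StarModule ℂ A] [CompleteSpace A]

/-- A representation is (topologically) irreducible if it is nonzero and has
no nontrivial closed invariant subspaces. -/
def HilbertRep.IsIrreducible (ρ : HilbertRep A) : Prop :=
  ρ.π ≠ 0 ∧ ∀ V : Submodule ℂ ρ.carrier, IsClosed (V : Set ρ.carrier) →
    (∀ a : A, ∀ v ∈ V, ρ.π a v ∈ V) → V = ⊥ ∨ V = ⊤

/-- A subset of `A` is a primitive ideal if it is the kernel of an irreducible
representation on some Hilbert space. -/
def IsPrimitive (P : Set A) : Prop :=
  ∃ ρ : HilbertRep A, ρ.IsIrreducible ∧ P = {a : A | ρ.π a = 0}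

/-- The primitive ideal space of `A`. -/
def PrimSpace (A : Type) [NonUnitalNormedRing A] [StarRing A] [CStarRing A]
    [NormedSpace ℂ A] [IsScalarTower ℂ A A] [SMulCommClass ℂ A A]
    [StarModule ℂ A] [CompleteSpace A] : Type :=
  {P : Set A // IsPrimitive P}

/-- The Jacobson (hull-kernel) topology on the primitive ideal space: the open
sets are generated by the complements of hulls of subsets. -/
instance : TopologicalSpace (PrimSpace A) :=
  TopologicalSpace.generateFrom
    {U : Set (PrimSpace A) | ∃ S : Set A, U = {J : PrimSpace A | ¬ S ⊆ J.1}}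


section AuxCStar

noncomputable instance : NonUnitalCStarAlgebra A where

lemma abs_le_norm_of_mem_quasispectrum {B : Type*} [NonUnitalCStarAlgebra B]
    {b : B} {s : ℝ} (hs : s ∈ quasispectrum ℝ b) : |s| ≤ ‖b‖ := by
  rw [Unitization.quasispectrum_eq_spectrum_inr' ℝ ℂ] at hs
  simpa [Unitization.norm_inr] using spectrum.norm_le_norm_of_mem hs

lemma cfcn_eq_zero_of_vanish {B : Type*} [NonUnitalCStarAlgebra B]
    (b : B) {h : ℝ → ℝ}
    (h0 : ∀ s : ℝ, |s| ≤ ‖b‖ → h s = 0) : cfcₙ h b = 0 := by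
  have h' : (quasispectrum ℝ b).EqOn h 0 := fun s hs =>
    h0 s (abs_le_norm_of_mem_quasispectrum hs)
  rw [cfcₙ_congr h']
  exact cfcₙ_zero ℝ b

lemma norm_one_sub_cfcn_le {B : Type*} [NonUnitalCStarAlgebra B] (a : B) (g : ℝ → ℝ)
    (hg : Continuous g) (hg0 : g 0 = 0) (ha : IsSelfAdjoint a)
    (hbd : ∀ s, 0 ≤ g s ∧ g s ≤ 1) :
    ‖(1 : Unitization ℂ B) - cfcₙ g a‖ ≤ 1 := by
  have h1 : ((cfcₙ g a : B) : Unitization ℂ B) = cfc g (a : Unitization ℂ B) :=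
    Unitization.real_cfcₙ_eq_cfc_inr a g hg0
  have ha' : IsSelfAdjoint (a : Unitization ℂ B) := ha.inr ℂ
  rw [h1, ← cfc_const_one ℝ (a : Unitization ℂ B), ← cfc_sub _ _ _
    (hf := continuousOn_const) (hg := hg.continuousOn)]
  exact norm_cfc_le zero_le_one fun s _ => by
    rw [Real.norm_eq_abs, abs_le]; constructor <;> nlinarith [(hbd s).1, (hbd s).2]

section Key

variable {B : Type*} [NonUnitalCStarAlgebra B]

lemma key_lemma (ρ : A →⋆ₙₐ[ℂ] B) (x : A) :
    Metric.infDist x {b : A | ρ b = 0} ≤ ‖ρ x‖ := by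
  have hρc : Continuous ρ :=
    AddMonoidHomClass.continuous_of_bound ρ 1 fun a => by
      simpa using NonUnitalStarAlgHom.norm_apply_le ρ a
  set t : ℝ := ‖ρ x‖ with ht
  set a : A := star x * x with ha_def
  have ha : IsSelfAdjoint a := IsSelfAdjoint.star_mul_self x
  have hρa : ‖ρ a‖ = t ^ 2 := by
    rw [ha_def, map_mul, map_star, CStarRing.norm_star_mul_self, sq]
  set γ : ℝ := t ^ 2 with hγ_def
  have hγ0 : 0 ≤ γ := sq_nonneg t
  set g : ℝ → ℝ := fun s => max (min s γ) (-γ) with hg_def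
  have hgcont : Continuous g := by fun_prop
  have hg0 : g 0 = 0 := by simp [hg_def, hγ0, neg_nonpos.mpr hγ0]
  have hgbound : ∀ s, |g s| ≤ γ := by
    intro s
    rw [abs_le]
    exact ⟨le_max_right _ _, max_le (min_le_right _ _) (by linarith)⟩
  set k : A := a - cfcₙ g a with hk_def
  have hρk : ρ k = 0 := by
    have h1 : ρ (cfcₙ g a) = cfcₙ g (ρ a) :=
      NonUnitalStarAlgHom.map_cfcₙ ρ g a (hf := hgcont.continuousOn) (hf₀ := hg0)
        (hφ := hρc) (ha := ha) (hφa := ha.map ρ)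
    have h2 : cfcₙ g (ρ a) = ρ a := by
      have heq : (quasispectrum ℝ (ρ a)).EqOn g id := by
        intro s hs
        have := abs_le_norm_of_mem_quasispectrum hs
        rw [hρa] at this
        rw [abs_le] at this
        simp only [hg_def, id]
        rw [min_eq_left this.2, max_eq_left this.1]
      rw [cfcₙ_congr heq, cfcₙ_id ℝ (ρ a) (ha.map ρ)]
    rw [hk_def, map_sub, h1, h2, sub_self]
  have hak : ‖a - k‖ ≤ γ := by
    rw [hk_def, sub_sub_cancel]
    exact norm_cfcₙ_le fun s _ => by simpa using hgbound s
  have hksa : IsSelfAdjoint k := ha.sub (cfcₙ_predicate g a)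
  -- main quantitative step
  have main : ∀ δ : ℝ, 0 < δ →
      Metric.infDist x {b : A | ρ b = 0} ^ 2 ≤ t ^ 2 + δ := by
    intro δ hδ
    set q : ℝ → ℝ := fun s => min (|s - g s| / δ) 1 with hq_def
    have hqcont : Continuous q :=
      (((continuous_abs.comp (continuous_id.sub hgcont)).div_const δ).min continuous_const)
    have hq0 : q 0 = 0 := by simp [hq_def, hg0, hδ.le]
    have hq01 : ∀ s, 0 ≤ q s ∧ q s ≤ 1 := fun s =>
      ⟨le_min (div_nonneg (abs_nonneg _) hδ.le) zero_le_one, min_le_right _ _⟩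
    set e : A := cfcₙ q a with he_def
    have hesa : IsSelfAdjoint e := cfcₙ_predicate q a
    have hρe : ρ e = 0 := by
      have h1 : ρ e = cfcₙ q (ρ a) :=
        NonUnitalStarAlgHom.map_cfcₙ ρ q a (hf := hqcont.continuousOn) (hf₀ := hq0)
          (hφ := hρc) (ha := ha) (hφa := ha.map ρ)
      rw [h1]
      refine cfcn_eq_zero_of_vanish (ρ a) fun s hs => ?_
      rw [hρa] at hs
      rw [abs_le] at hs
      have hgs : g s = s := by
        simp only [hg_def]
        rw [min_eq_left hs.2, max_eq_left hs.1]
      simp [hq_def, hgs, hδ.le]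
    have hke : ‖k - k * e‖ ≤ δ := by
      have hfc : ContinuousOn (fun s : ℝ => s - g s) (quasispectrum ℝ a) :=
        (continuous_id'.sub hgcont).continuousOn
      have hfc0 : (fun s : ℝ => s - g s) 0 = 0 := by simp [hg0]
      have hk' : k = cfcₙ (fun s => s - g s) a := by
        rw [hk_def]
        nth_rw 1 [← cfcₙ_id' ℝ a ha]
        exact (cfcₙ_sub (fun s : ℝ => s) g a continuousOn_id rfl
          hgcont.continuousOn hg0).symm
      have hmul : k * e = cfcₙ (fun s => (s - g s) * q s) a := by
        rw [hk', he_def]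
        exact (cfcₙ_mul (fun s : ℝ => s - g s) q a hfc hfc0
          hqcont.continuousOn hq0).symm
      have hsub : k - k * e = cfcₙ (fun s => (s - g s) - (s - g s) * q s) a := by
        rw [hmul, hk']
        exact (cfcₙ_sub (fun s : ℝ => s - g s) (fun s => (s - g s) * q s) a hfc hfc0
          (hfc.mul hqcont.continuousOn) (by simp [hg0, hq0])).symm
      rw [hsub]
      refine norm_cfcₙ_le fun s _ => ?_
      rw [Real.norm_eq_abs]
      set u : ℝ := s - g s with hu
      rcases le_or_gt |u| δ with h | h
      · have h1 : q s ≤ 1 := (hq01 s).2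
        have h0 : 0 ≤ q s := (hq01 s).1
        calc |u - u * q s| = |u| * |1 - q s| := by rw [← abs_mul]; ring_nf
          _ ≤ |u| * 1 := by
              refine mul_le_mul_of_nonneg_left ?_ (abs_nonneg u)
              rw [abs_le]; constructor <;> linarith
          _ ≤ δ := by linarith
      · have h1 : q s = 1 := by
          simp only [hq_def, ← hu]
          exact min_eq_right ((one_le_div hδ).mpr h.le)
        rw [h1, mul_one, sub_self, abs_zero]
        exact hδ.le
    -- pass to the unitization
    have h1E : ‖(1 : Unitization ℂ A) - e‖ ≤ 1 := by
      rw [he_def]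
      exact norm_one_sub_cfcn_le a q hqcont hq0 ha hq01
    have hsaE : star ((1 : Unitization ℂ A) - e) = 1 - e :=
      ((IsSelfAdjoint.one (R := Unitization ℂ A)).sub (hesa.inr ℂ)).star_eq
    set X : Unitization ℂ A := (x : Unitization ℂ A) with hX_def
    set E : Unitization ℂ A := (e : Unitization ℂ A) with hE_def
    set A1 : Unitization ℂ A := ((a : A) : Unitization ℂ A) with hA1_def
    set K1 : Unitization ℂ A := ((k : A) : Unitization ℂ A) with hK1_def
    have hXX : star X * X = A1 := by
      rw [hX_def, hA1_def, ha_def, Unitization.inr_mul, Unitization.inr_star]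
    have hAK : ‖A1 - K1‖ ≤ γ := by
      rw [hA1_def, hK1_def, ← Unitization.inr_sub, Unitization.norm_inr]
      exact hak
    have hKE : ‖K1 - K1 * E‖ ≤ δ := by
      rw [hK1_def, hE_def, ← Unitization.inr_mul, ← Unitization.inr_sub,
        Unitization.norm_inr]
      exact hke
    have hsq : ‖x - x * e‖ ^ 2 ≤ γ + δ := by
      have e1 : ‖x - x * e‖ ^ 2 = ‖X - X * E‖ ^ 2 := by
        rw [hX_def, hE_def, ← Unitization.inr_mul, ← Unitization.inr_sub,
          Unitization.norm_inr]
      rw [e1, ← mul_one_sub, sq, ← CStarRing.norm_star_mul_self]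
      have e2 : star (X * (1 - E)) * (X * (1 - E)) = (1 - E) * A1 * (1 - E) := by
        rw [star_mul, hsaE, ← hXX]
        noncomm_ring
      rw [e2]
      have e3 : (1 - E) * A1 * (1 - E)
          = (1 - E) * (A1 - K1) * (1 - E) + (1 - E) * (K1 - K1 * E) := by
        noncomm_ring
      rw [e3]
      refine (norm_add_le _ _).trans ?_
      have h1Enorm : ‖(1 : Unitization ℂ A) - E‖ ≤ 1 := by rw [hE_def]; exact h1E
      have b1 : ‖(1 - E) * (A1 - K1) * (1 - E)‖ ≤ γ :=
        calc ‖(1 - E) * (A1 - K1) * (1 - E)‖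
            ≤ ‖(1 - E) * (A1 - K1)‖ * ‖1 - E‖ := norm_mul_le _ _
          _ ≤ ‖1 - E‖ * ‖A1 - K1‖ * ‖1 - E‖ := by gcongr; exact norm_mul_le _ _
          _ ≤ 1 * γ * 1 :=
              mul_le_mul (mul_le_mul h1Enorm hAK (norm_nonneg _) zero_le_one) h1Enorm
                (norm_nonneg _) (by linarith)
          _ = γ := by ring
      have b2 : ‖(1 - E) * (K1 - K1 * E)‖ ≤ δ :=
        calc ‖(1 - E) * (K1 - K1 * E)‖ ≤ ‖1 - E‖ * ‖K1 - K1 * E‖ := norm_mul_le _ _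
          _ ≤ 1 * δ := mul_le_mul h1Enorm hKE (norm_nonneg _) zero_le_one
          _ = δ := one_mul δ
      linarith
    have hmem : x * e ∈ {b : A | ρ b = 0} := by
      simp only [Set.mem_setOf_eq, map_mul, hρe, mul_zero]
    have h1 : Metric.infDist x {b : A | ρ b = 0} ≤ ‖x - x * e‖ := by
      simpa [dist_eq_norm] using Metric.infDist_le_dist_of_mem hmem
    have h2 := pow_le_pow_left₀ Metric.infDist_nonneg h1 2
    linarith
  have h2 : Metric.infDist x {b : A | ρ b = 0} ^ 2 ≤ t ^ 2 :=
    le_of_forall_pos_le_add main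
  nlinarith [Metric.infDist_nonneg (x := x) (s := {b : A | ρ b = 0}), norm_nonneg (ρ x)]


end Key

lemma norm_apply_le_infDist {B : Type*} [NonUnitalCStarAlgebra B] (ρ : A →⋆ₙₐ[ℂ] B) (x : A) :
    ‖ρ x‖ ≤ Metric.infDist x {b : A | ρ b = 0} := by
  by_contra h
  push_neg at h
  obtain ⟨b, hb, hlt⟩ := (Metric.infDist_lt_iff ⟨0, by simp⟩).mp h
  have hb' : ρ b = 0 := hb
  have : ‖ρ x‖ ≤ dist x b := by
    rw [dist_eq_norm]
    calc ‖ρ x‖ = ‖ρ (x - b)‖ := by rw [map_sub, hb', sub_zero]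
      _ ≤ ‖x - b‖ := NonUnitalStarAlgHom.norm_apply_le ρ _
  linarith

lemma hom_clamp_eq_zero {B : Type*} [NonUnitalCStarAlgebra B] (ρ : A →⋆ₙₐ[ℂ] B) {a : A}
    (ha : IsSelfAdjoint a) {γ : ℝ} (hγ0 : 0 ≤ γ) (hγ : ‖ρ a‖ ≤ γ) :
    ρ (a - cfcₙ (fun s => max (min s γ) (-γ)) a) = 0 := by
  have hρc : Continuous ρ :=
    AddMonoidHomClass.continuous_of_bound ρ 1 fun b => by
      simpa using NonUnitalStarAlgHom.norm_apply_le ρ b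
  set g : ℝ → ℝ := fun s => max (min s γ) (-γ) with hg_def
  have hgcont : Continuous g := by fun_prop
  have hg0 : g 0 = 0 := by simp [hg_def, hγ0, neg_nonpos.mpr hγ0]
  have h1 : ρ (cfcₙ g a) = cfcₙ g (ρ a) :=
    NonUnitalStarAlgHom.map_cfcₙ ρ g a (hf := hgcont.continuousOn) (hf₀ := hg0)
      (hφ := hρc) (ha := ha) (hφa := ha.map ρ)
  have h2 : cfcₙ g (ρ a) = ρ a := by
    have heq : (quasispectrum ℝ (ρ a)).EqOn g id := by
      intro s hs
      have habs := (abs_le_norm_of_mem_quasispectrum hs).trans hγ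
      rw [abs_le] at habs
      simp only [hg_def, id]
      rw [min_eq_left habs.2, max_eq_left habs.1]
    rw [cfcₙ_congr heq, cfcₙ_id ℝ (ρ a) (ha.map ρ)]
  rw [map_sub, h1, h2, sub_self]


end AuxCStar

/-- For `x ∈ A`, the function `J ↦ ‖x‖_J = ‖x + J‖` (the quotient norm, i.e.
the distance from `x` to the ideal `J`) is lower semicontinuous on the
primitive ideal space with its Jacobson topology. -/
theorem lowerSemicontinuous_quotientNorm (x : A) :
    LowerSemicontinuous fun J : PrimSpace A => Metric.infDist x (J.1 : Set A) := by
  intro J₀ c hc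
  obtain ⟨ρ₀, -, hJ₀⟩ := J₀.2
  rcases lt_or_ge c 0 with hc0 | hc0
  · exact Filter.Eventually.of_forall fun J => lt_of_lt_of_le hc0 Metric.infDist_nonneg
  have hcd : c < ‖ρ₀.π x‖ := by
    refine lt_of_lt_of_le ?_ (key_lemma ρ₀.π x)
    rw [← hJ₀]
    exact hc
  set d : ℝ := ‖ρ₀.π x‖ with hd_def
  set γ : ℝ := (c ^ 2 + d ^ 2) / 2 with hγ_def
  have hcd2 : c ^ 2 < d ^ 2 := by nlinarith
  have hγc : c ^ 2 ≤ γ := by nlinarith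
  have hγd : γ < d ^ 2 := by nlinarith
  have hγ0 : 0 ≤ γ := by nlinarith
  set a : A := star x * x with ha_def
  have ha : IsSelfAdjoint a := IsSelfAdjoint.star_mul_self x
  set y : A := a - cfcₙ (fun s => max (min s γ) (-γ)) a with hy_def
  set U : Set (PrimSpace A) := {J : PrimSpace A | ¬ ({y} : Set A) ⊆ J.1} with hU_def
  have hUopen : IsOpen U := TopologicalSpace.isOpen_generateFrom_of_mem ⟨{y}, rfl⟩
  have hclamp : ‖cfcₙ (fun s => max (min s γ) (-γ)) a‖ ≤ γ :=
    norm_cfcₙ_le fun s _ => by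
      rw [Real.norm_eq_abs, abs_le]
      exact ⟨le_max_right _ _, max_le (min_le_right _ _) (by linarith)⟩
  have hmem : J₀ ∈ U := by
    intro hsub
    have hy0 : ρ₀.π y = 0 := by
      have : y ∈ J₀.1 := hsub rfl
      rw [hJ₀] at this
      exact this
    have hnorm : ‖ρ₀.π a‖ = d ^ 2 := by
      rw [ha_def, map_mul, map_star, CStarRing.norm_star_mul_self, hd_def, sq]
    have : ‖ρ₀.π a‖ ≤ γ := by
      have h1 : ρ₀.π a = ρ₀.π (a - y) := by rw [map_sub, hy0, sub_zero]
      rw [h1]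
      refine (NonUnitalStarAlgHom.norm_apply_le ρ₀.π _).trans ?_
      rw [hy_def, sub_sub_cancel]
      exact hclamp
    rw [hnorm] at this
    linarith
  refine Filter.eventually_of_mem (hUopen.mem_nhds hmem) fun J hJU => ?_
  obtain ⟨ρ, -, hJ⟩ := J.2
  have hyJ : ρ.π y ≠ 0 := by
    intro h0
    exact hJU fun z hz => by
      rw [Set.mem_singleton_iff] at hz
      rw [hz, hJ]
      exact h0
  have hnorm : c < ‖ρ.π x‖ := by
    by_contra hle
    push_neg at hle
    have hρa : ‖ρ.π a‖ ≤ γ := by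
      rw [ha_def, map_mul, map_star, CStarRing.norm_star_mul_self]
      nlinarith [norm_nonneg (ρ.π x)]
    exact hyJ (hom_clamp_eq_zero ρ.π ha hγ0 hρa)
  refine lt_of_lt_of_le hnorm ?_
  show ‖ρ.π x‖ ≤ Metric.infDist x (J.1 : Set A)
  rw [hJ]
  exact norm_apply_le_infDist ρ.π x
end

section
/- Let x = [[λ, −μ̄],[μ, λ̄]] ∈ SU(2) with Re(λμ) ≠ 0, Im(λμ) ≠ 0, Re(λ̄μ) ≠ 0, Im(λ̄μ) ≠ 0, and |λ| ≠ |μ|. Let P_{ij} ∈ B(M_2(ℂ)) denote the orthogonal rank-one projection onto ℂ·ξ^x_{ij}, where ξ^x_{ij} = c_i x c_j with c_1,...,c_4 the Pauli matrices and M_2(ℂ) carrying the Hilbert–Schmidt inner product. Then the commutant of the set {P_{ij} : 1 ≤ i,j ≤ 4} in B(M_2(ℂ)) ≅ M_4(ℂ) consists only of scalar multiples of the identity. -/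
open Matrix

/-- The four Pauli matrices `c_1, c_2, c_3, c_4`. -/
noncomputable def pauli : Fin 4 → Matrix (Fin 2) (Fin 2) ℂ := fun i =>
  if i = 0 then 1
  else if i = 1 then !![Complex.I, 0; 0, -Complex.I]
  else if i = 2 then !![0, 1; -1, 0]
  else !![0, Complex.I; Complex.I, 0]

/-- `ξ^x_{ij} = c_i x c_j` for `x = [[λ, -μ̄],[μ, λ̄]]`. -/
noncomputable def xi (l m : ℂ) (i j : Fin 4) : Matrix (Fin 2) (Fin 2) ℂ :=
  pauli i * !![l, -(starRingEnd ℂ) m; m, (starRingEnd ℂ) l] * pauli j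

/-- The orthogonal rank-one projection of `M₂(ℂ)` (with the Hilbert–Schmidt
inner product `⟨a|b⟩ = tr(b* a)`, in which each `ξ^x_{ij}` has norm √2) onto
the line `ℂ · ξ^x_{ij}`:  `a ↦ (1/2) tr((ξ^x_{ij})* a) • ξ^x_{ij}`. -/
noncomputable def Pproj (l m : ℂ) (i j : Fin 4) :
    Matrix (Fin 2) (Fin 2) ℂ →ₗ[ℂ] Matrix (Fin 2) (Fin 2) ℂ :=
  (2 : ℂ)⁻¹ • ((LinearMap.toSpanSingleton ℂ _ (xi l m i j)) ∘ₗ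
    (Matrix.traceLinearMap (Fin 2) ℂ ℂ) ∘ₗ (LinearMap.mulLeft ℂ ((xi l m i j)ᴴ)))

/-!
A map `T` commuting with the projection onto `ℂ ξ_{ij}` has `ξ_{ij}` as an eigenvector. The
matrices `ξ_{k1} = c_k x` form a basis of `M₂(ℂ)`, because the Pauli matrices do and `x` is
unitary. In this basis, `ξ_{12} = x c_2 = (|λ|² - |μ|²) ξ_{21} + 2 Im(λ̄μ) ξ_{31} + 2 Re(λ̄μ) ξ_{41}`
and `ξ_{22} = c_2 x c_2 = -(|λ|² - |μ|²) ξ_{11} - 2 Re(λ̄μ) ξ_{31} + 2 Im(λ̄μ) ξ_{41}`. An eigenvector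
that is a combination of independent eigenvectors shares the eigenvalue of each one occurring
with a nonzero coefficient, so all four basis vectors have the same eigenvalue. (In Lean the
indices of `pauli` and `xi` start at 0, so `ξ_{12}` is `xi l m 0 1`.)
-/

open ComplexConjugate

lemma LinearMap.exists_apply_eq_smul_of_comp_comm {R M : Type*} [Semiring R] [AddCommMonoid M]
    [Module R M] {T P : M →ₗ[R] M} (hTP : T ∘ₗ P = P ∘ₗ T) {v : M} (hPv : P v = v)
    (hP : ∀ w, ∃ c : R, P w = c • v) : ∃ a : R, T v = a • v := by
  obtain ⟨a, ha⟩ := hP (T v)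
  refine ⟨a, ?_⟩
  calc T v = T (P v) := by rw [hPv]
    _ = P (T v) := LinearMap.congr_fun hTP v
    _ = a • v := ha

lemma LinearIndependent.eigenvalue_eq_of_apply_sum {K V ι : Type*} [Field K] [AddCommGroup V]
    [Module K V] [Fintype ι] {v : ι → V} (hv : LinearIndependent K v) {T : V →ₗ[K] V}
    {a : ι → K} (hTv : ∀ i, T (v i) = a i • v i) {c : ι → K} {b : K}
    (hb : T (∑ i, c i • v i) = b • ∑ i, c i • v i) {i : ι} (hci : c i ≠ 0) : a i = b := by
  have hsum : ∑ k, (c k * (a k - b)) • v k = 0 := by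
    simp only [mul_sub, sub_smul, Finset.sum_sub_distrib, mul_smul, ← hTv, ← map_smul, ← map_sum,
      hb, Finset.smul_sum]
    simp [smul_smul, mul_comm]
  have hi := Fintype.linearIndependent_iff.1 hv _ hsum i
  exact sub_eq_zero.1 ((mul_eq_zero.1 hi).resolve_left hci)

lemma Complex.ofReal_two_mul_im (z : ℂ) : ((2 * z.im : ℝ) : ℂ) = I * (conj z - z) := by
  linear_combination (norm := (push_cast; ring)) I * sub_conj z + (2 * z.im : ℂ) * I_sq

def su2Matrix (l m : ℂ) : Matrix (Fin 2) (Fin 2) ℂ := !![l, -conj m; m, conj l]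

lemma xi_eq_pauli_mul_su2Matrix_mul (l m : ℂ) (i j : Fin 4) :
    xi l m i j = pauli i * su2Matrix l m * pauli j := rfl

lemma pauli_zero : pauli 0 = 1 := rfl

lemma pauli_conjTranspose_mul_self (i : Fin 4) : (pauli i)ᴴ * pauli i = 1 := by
  fin_cases i <;> ext a b <;> fin_cases a <;> fin_cases b <;>
    simp [pauli, mul_apply, Fin.sum_univ_two]

lemma pauli_linearIndependent : LinearIndependent ℂ pauli := by
  rw [Fintype.linearIndependent_iff]
  intro g hg
  have entry (a b : Fin 2) := congrFun (congrFun hg a) b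
  have h00 : g 0 + g 1 * Complex.I = 0 := by simpa [Fin.sum_univ_four, pauli] using entry 0 0
  have h11 : g 0 - g 1 * Complex.I = 0 := by
    simpa [Fin.sum_univ_four, pauli, sub_eq_add_neg] using entry 1 1
  have h01 : g 2 + g 3 * Complex.I = 0 := by simpa [Fin.sum_univ_four, pauli] using entry 0 1
  have h10 : -g 2 + g 3 * Complex.I = 0 := by simpa [Fin.sum_univ_four, pauli] using entry 1 0
  have g0 : g 0 = 0 := by linear_combination (h00 + h11) / 2
  have g1 : g 1 * Complex.I = 0 := by linear_combination (h00 - h11) / 2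
  have g2 : g 2 = 0 := by linear_combination (h01 - h10) / 2
  have g3 : g 3 * Complex.I = 0 := by linear_combination (h01 + h10) / 2
  rw [mul_eq_zero, or_iff_left Complex.I_ne_zero] at g1 g3
  intro i
  fin_cases i <;> assumption

section

variable {l m : ℂ}

lemma conj_mul_self_add_conj_mul_self (hx : ‖l‖ ^ 2 + ‖m‖ ^ 2 = 1) :
    conj l * l + conj m * m = 1 := by
  rw [Complex.conj_mul', Complex.conj_mul']
  exact_mod_cast hx

lemma su2Matrix_conjTranspose_mul_self (hx : ‖l‖ ^ 2 + ‖m‖ ^ 2 = 1) :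
    (su2Matrix l m)ᴴ * su2Matrix l m = 1 := by
  have h := conj_mul_self_add_conj_mul_self hx
  ext a b
  fin_cases a <;> fin_cases b <;> simp [su2Matrix, mul_apply, Fin.sum_univ_two] <;>
    first | ring1 | linear_combination h

lemma xi_conjTranspose_mul_self (hx : ‖l‖ ^ 2 + ‖m‖ ^ 2 = 1) (i j : Fin 4) :
    (xi l m i j)ᴴ * xi l m i j = 1 := by
  simp only [xi_eq_pauli_mul_su2Matrix_mul, conjTranspose_mul, Matrix.mul_assoc]
  rw [← Matrix.mul_assoc (pauli i)ᴴ, pauli_conjTranspose_mul_self, Matrix.one_mul,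
    ← Matrix.mul_assoc (su2Matrix l m)ᴴ, su2Matrix_conjTranspose_mul_self hx, Matrix.one_mul,
    pauli_conjTranspose_mul_self]

lemma Pproj_apply (i j : Fin 4) (A : Matrix (Fin 2) (Fin 2) ℂ) :
    Pproj l m i j A = ((2 : ℂ)⁻¹ * trace ((xi l m i j)ᴴ * A)) • xi l m i j := by
  simp [Pproj, smul_smul]

lemma Pproj_apply_xi (hx : ‖l‖ ^ 2 + ‖m‖ ^ 2 = 1) (i j : Fin 4) :
    Pproj l m i j (xi l m i j) = xi l m i j := by
  rw [Pproj_apply, xi_conjTranspose_mul_self hx, trace_one]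
  norm_num

lemma exists_apply_xi_eq_smul (hx : ‖l‖ ^ 2 + ‖m‖ ^ 2 = 1) {i j : Fin 4}
    {T : Matrix (Fin 2) (Fin 2) ℂ →ₗ[ℂ] Matrix (Fin 2) (Fin 2) ℂ}
    (hT : T ∘ₗ Pproj l m i j = Pproj l m i j ∘ₗ T) : ∃ a : ℂ, T (xi l m i j) = a • xi l m i j :=
  LinearMap.exists_apply_eq_smul_of_comp_comm hT (Pproj_apply_xi hx i j)
    fun A => ⟨_, Pproj_apply i j A⟩

lemma linearIndependent_xi_zero (hx : ‖l‖ ^ 2 + ‖m‖ ^ 2 = 1) :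
    LinearIndependent ℂ (fun i => xi l m i 0) := by
  have hinj := mul_left_injective_of_inv (l := Fin 2) _ _
    (mul_eq_one_comm.1 (su2Matrix_conjTranspose_mul_self hx))
  simpa [Function.comp_def, xi_eq_pauli_mul_su2Matrix_mul, pauli_zero] using
    pauli_linearIndependent.map' (LinearMap.mulRight ℂ (su2Matrix l m)) (LinearMap.ker_eq_bot.2 hinj)

lemma xi_zero_one_eq_sum (hx : ‖l‖ ^ 2 + ‖m‖ ^ 2 = 1) :
    xi l m 0 1 = ∑ k, ![0, ((‖l‖ ^ 2 - ‖m‖ ^ 2 : ℝ) : ℂ), ((2 * (conj l * m).im : ℝ) : ℂ),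
      ((2 * (conj l * m).re : ℝ) : ℂ)] k • xi l m k 0 := by
  have key : (conj l * l + conj m * m) • xi l m 0 1 = ∑ k, ![0, conj l * l - conj m * m,
      Complex.I * (l * conj m - conj l * m), conj l * m + l * conj m] k • xi l m k 0 := by
    ext i j
    fin_cases i <;> fin_cases j <;> simp [Fin.sum_univ_four, xi, pauli] <;> grind [Complex.I_sq]
  rw [conj_mul_self_add_conj_mul_self hx, one_smul] at key
  rw [key, Complex.ofReal_two_mul_im, ← Complex.add_conj]
  push_cast
  simp only [Complex.conj_mul', map_mul, Complex.conj_conj]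

lemma xi_one_one_eq_sum (hx : ‖l‖ ^ 2 + ‖m‖ ^ 2 = 1) :
    xi l m 1 1 = ∑ k, ![-((‖l‖ ^ 2 - ‖m‖ ^ 2 : ℝ) : ℂ), 0, -((2 * (conj l * m).re : ℝ) : ℂ),
      ((2 * (conj l * m).im : ℝ) : ℂ)] k • xi l m k 0 := by
  have key : (conj l * l + conj m * m) • xi l m 1 1 = ∑ k, ![-(conj l * l - conj m * m), 0,
      -(conj l * m + l * conj m), Complex.I * (l * conj m - conj l * m)] k • xi l m k 0 := by
    ext i j
    fin_cases i <;> fin_cases j <;> simp [Fin.sum_univ_four, xi, pauli] <;> grind [Complex.I_sq]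
  rw [conj_mul_self_add_conj_mul_self hx, one_smul] at key
  rw [key, Complex.ofReal_two_mul_im, ← Complex.add_conj]
  push_cast
  simp only [Complex.conj_mul', map_mul, Complex.conj_conj]

end

theorem commutant_pauli_projections_scalar_general
    (l m : ℂ) (hx : ‖l‖ ^ 2 + ‖m‖ ^ 2 = 1)
    (h3 : ((starRingEnd ℂ) l * m).re ≠ 0) (h4 : ((starRingEnd ℂ) l * m).im ≠ 0)
    (h5 : ‖l‖ ≠ ‖m‖)
    (T : Matrix (Fin 2) (Fin 2) ℂ →ₗ[ℂ] Matrix (Fin 2) (Fin 2) ℂ)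
    (hT : ∀ i j : Fin 4, T ∘ₗ Pproj l m i j = Pproj l m i j ∘ₗ T) :
    ∃ c : ℂ, T = c • LinearMap.id := by
  have hD : ((‖l‖ ^ 2 - ‖m‖ ^ 2 : ℝ) : ℂ) ≠ 0 := by
    rw [Complex.ofReal_ne_zero, sub_ne_zero]
    exact fun h => h5 ((pow_left_inj₀ (norm_nonneg l) (norm_nonneg m) two_ne_zero).1 h)
  have hQ : ((2 * (conj l * m).im : ℝ) : ℂ) ≠ 0 := by exact_mod_cast mul_ne_zero two_ne_zero h4
  have hP : ((2 * (conj l * m).re : ℝ) : ℂ) ≠ 0 := by exact_mod_cast mul_ne_zero two_ne_zero h3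
  choose a ha using fun k => exists_apply_xi_eq_smul hx (hT k 0)
  obtain ⟨b, hb⟩ := exists_apply_xi_eq_smul hx (hT 0 1)
  obtain ⟨e, he⟩ := exists_apply_xi_eq_smul hx (hT 1 1)
  rw [xi_zero_one_eq_sum hx] at hb
  rw [xi_one_one_eq_sum hx] at he
  have hli := linearIndependent_xi_zero hx
  have ha1 : a 1 = b := hli.eigenvalue_eq_of_apply_sum ha hb (i := 1) hD
  have ha2 : a 2 = b := hli.eigenvalue_eq_of_apply_sum ha hb (i := 2) hQ
  have ha3 : a 3 = b := hli.eigenvalue_eq_of_apply_sum ha hb (i := 3) hP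
  have ha0 : a 0 = a 2 := (hli.eigenvalue_eq_of_apply_sum ha he (i := 0) (neg_ne_zero.2 hD)).trans
    (hli.eigenvalue_eq_of_apply_sum ha he (i := 2) (neg_ne_zero.2 hP)).symm
  refine ⟨b, (basisOfLinearIndependentOfCardEqFinrank hli
    (by simp [Module.finrank_matrix])).ext fun k => ?_⟩
  fin_cases k <;> simp [ha, ha0, ha1, ha2, ha3]

/-- For `x ∈ SU(2)` outside the exceptional set `S`, the commutant of the
sixteen rank-one projections `P_{ij}` in `B(M₂(ℂ)) ≅ M₄(ℂ)` consists only of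
the scalar multiples of the identity. -/
theorem commutant_pauli_projections_scalar
    (l m : ℂ) (hx : ‖l‖ ^ 2 + ‖m‖ ^ 2 = 1)
    (h1 : (l * m).re ≠ 0) (h2 : (l * m).im ≠ 0)
    (h3 : ((starRingEnd ℂ) l * m).re ≠ 0) (h4 : ((starRingEnd ℂ) l * m).im ≠ 0)
    (h5 : ‖l‖ ≠ ‖m‖)
    (T : Matrix (Fin 2) (Fin 2) ℂ →ₗ[ℂ] Matrix (Fin 2) (Fin 2) ℂ)
    (hT : ∀ i j : Fin 4, T ∘ₗ Pproj l m i j = Pproj l m i j ∘ₗ T) :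
    ∃ c : ℂ, T = c • LinearMap.id :=
  commutant_pauli_projections_scalar_general l m hx h3 h4 h5 T hT
end

section
/- With notation as in the Pauli representation: for x = [[λ, −μ̄],[μ, λ̄]] ∈ SU(2), let P^x_{ij} denote the orthogonal projection of M_2(ℂ) (with Hilbert–Schmidt inner product) onto ℂ·ξ^x_{ij} where ξ^x_{ij} = c_i x c_j. Then the operator norm ‖P^x_{11} P^x_{22}‖ equals | |λ|² − |μ|² |. -/
open Matrix

attribute [local instance] Matrix.frobeniusNormedAddCommGroup
  Matrix.frobeniusNormedSpace

/-! With the Hilbert–Schmidt inner product, `M₂(ℂ)` is an inner product space in which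
`P^x_{ij}` is the orthogonal projection onto `ℂ ∙ ξ^x_{ij}`. For lines spanned by `ξ` and `η`,
`P_ξ P_η = ⟪ξ, η⟫ / (‖ξ‖² ‖η‖²) • |ξ⟩⟨η|`, a rank-one operator of norm `‖⟪ξ, η⟫‖ / (‖ξ‖ ‖η‖)`.
Since the Pauli matrices are unitary and `xᴴ x = (|λ|² + |μ|²) • 1`, every `ξ^x_{ij}` has
norm `√2`, while `⟪ξ^x_{11}, ξ^x_{22}⟫ = tr (xᴴ c₂ x c₂) = 2 (|μ|² - |λ|²)`. -/

section

open InnerProductSpace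

variable {𝕜 E : Type*} [RCLike 𝕜] [NormedAddCommGroup E] [InnerProductSpace 𝕜 E]

theorem starProjection_span_singleton_eq_rankOne (ξ : E) :
    (𝕜 ∙ ξ).starProjection = ((‖ξ‖ ^ 2 : ℝ) : 𝕜)⁻¹ • rankOne 𝕜 ξ ξ := by
  ext a
  simp [Submodule.starProjection_singleton, div_eq_inv_mul, mul_smul]

theorem norm_starProjection_span_singleton_comp (ξ η : E) :
    ‖(𝕜 ∙ ξ).starProjection ∘L (𝕜 ∙ η).starProjection‖ = ‖inner 𝕜 ξ η‖ / (‖ξ‖ * ‖η‖) := by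
  rcases eq_or_ne ξ 0 with rfl | hξ
  · simp
  rcases eq_or_ne η 0 with rfl | hη
  · simp
  simp only [starProjection_span_singleton_eq_rankOne, ContinuousLinearMap.smul_comp,
    ContinuousLinearMap.comp_smul, rankOne_comp_rankOne, smul_smul, norm_smul, norm_rankOne,
    norm_mul, norm_inv, RCLike.norm_ofReal, abs_pow, abs_norm]
  have := norm_pos_iff.2 hξ
  have := norm_pos_iff.2 hη
  field_simp

end

namespace Matrix

variable {m n 𝕜 : Type*} [Fintype m] [Fintype n] [RCLike 𝕜]

/-- The Hilbert–Schmidt inner product, pulled back along the same `PiLp` embedding that defines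
the Frobenius norm, so that the two agree definitionally. -/
@[reducible] noncomputable def frobeniusInnerProductSpace :
    InnerProductSpace 𝕜 (Matrix m n 𝕜) where
  inner a b := inner 𝕜 (WithLp.toLp 2 fun i => WithLp.toLp 2 (a i))
    (WithLp.toLp 2 fun i => WithLp.toLp 2 (b i))
  norm_sq_eq_re_inner a :=
    norm_sq_eq_re_inner (𝕜 := 𝕜) (WithLp.toLp 2 fun i => WithLp.toLp 2 (a i))
  conj_inner_symm _ _ := inner_conj_symm _ _
  add_left a b _ := inner_add_left (WithLp.toLp 2 fun i => WithLp.toLp 2 (a i))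
    (WithLp.toLp 2 fun i => WithLp.toLp 2 (b i)) _
  smul_left a _ r := inner_smul_left (WithLp.toLp 2 fun i => WithLp.toLp 2 (a i)) _ r

theorem trace_conjTranspose_mul_self_unitary_mul_unitary {α : Type*} [DecidableEq n] [CommRing α]
    [StarRing α] {U V : Matrix n n α} (hU : U ∈ unitaryGroup n α) (hV : V ∈ unitaryGroup n α)
    (A : Matrix n n α) : ((U * A * V)ᴴ * (U * A * V)).trace = (Aᴴ * A).trace := by
  have hU' : Uᴴ * U = 1 := Unitary.star_mul_self_of_mem hU
  have hV' : V * Vᴴ = 1 := Unitary.mul_star_self_of_mem hV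
  simp only [conjTranspose_mul, Matrix.mul_assoc]
  rw [← Matrix.mul_assoc Uᴴ, hU', Matrix.one_mul, trace_mul_comm]
  simp only [Matrix.mul_assoc, hV', Matrix.mul_one]

end Matrix

attribute [local instance] Matrix.frobeniusInnerProductSpace

theorem Matrix.frobenius_inner_eq_trace {m n 𝕜 : Type*} [Fintype m] [Fintype n] [RCLike 𝕜]
    (a b : Matrix m n 𝕜) : inner 𝕜 a b = (aᴴ * b).trace := by
  have : inner 𝕜 a b = inner 𝕜 (WithLp.toLp 2 fun i => WithLp.toLp 2 (a i))
      (WithLp.toLp 2 fun i => WithLp.toLp 2 (b i)) := rfl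
  rw [this]
  simp [PiLp.inner_apply, trace, mul_apply, Finset.sum_comm (γ := m), mul_comm]

open ComplexConjugate

theorem pauli_mem_unitaryGroup (i : Fin 4) : pauli i ∈ unitaryGroup (Fin 2) ℂ := by
  rw [mem_unitaryGroup_iff]
  fin_cases i <;> ext a b <;> fin_cases a <;> fin_cases b <;> simp [pauli, mul_apply]

theorem conjTranspose_mul_self_quaternion_matrix (l m : ℂ) :
    (!![l, -conj m; m, conj l])ᴴ * !![l, -conj m; m, conj l] =
      ((‖l‖ ^ 2 + ‖m‖ ^ 2 : ℝ) : ℂ) • 1 := by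
  ext a b
  fin_cases a <;> fin_cases b <;>
    simp [mul_apply, Complex.ofReal_pow, ← Complex.mul_conj', mul_comm, add_comm]

theorem norm_sq_xi (l m : ℂ) (i j : Fin 4) : ‖xi l m i j‖ ^ 2 = 2 * (‖l‖ ^ 2 + ‖m‖ ^ 2) := by
  rw [@norm_sq_eq_re_inner ℂ, frobenius_inner_eq_trace, xi,
    trace_conjTranspose_mul_self_unitary_mul_unitary (pauli_mem_unitaryGroup i)
      (pauli_mem_unitaryGroup j),
    conjTranspose_mul_self_quaternion_matrix, trace_smul, trace_one, Fintype.card_fin,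
    smul_eq_mul, mul_comm]
  simp [-Complex.ofReal_pow]

theorem norm_xi {l m : ℂ} (hx : ‖l‖ ^ 2 + ‖m‖ ^ 2 = 1) (i j : Fin 4) : ‖xi l m i j‖ = √2 := by
  rw [← Real.sqrt_sq (norm_nonneg _), norm_sq_xi, hx, mul_one]

theorem xi_one_one (l m : ℂ) : xi l m 1 1 = !![-l, -conj m; m, -conj l] := by
  ext a b
  fin_cases a <;> fin_cases b <;> (simp [xi, pauli, mul_apply]; ring_nf; simp)

theorem inner_xi_zero_zero_xi_one_one (l m : ℂ) :
    inner ℂ (xi l m 0 0) (xi l m 1 1) = ((2 * (‖m‖ ^ 2 - ‖l‖ ^ 2) : ℝ) : ℂ) := by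
  rw [frobenius_inner_eq_trace, xi_one_one]
  simp [xi, pauli, trace_fin_two, mul_apply, Complex.ofReal_pow, ← Complex.mul_conj']
  ring

theorem toContinuousLinearMap_Pproj {l m : ℂ} (hx : ‖l‖ ^ 2 + ‖m‖ ^ 2 = 1) (i j : Fin 4) :
    LinearMap.toContinuousLinearMap (Pproj l m i j) = (ℂ ∙ xi l m i j).starProjection := by
  ext a : 1
  change Pproj l m i j a = _
  refine Eq.trans ?_ (Submodule.starProjection_singleton ℂ a).symm
  rw [frobenius_inner_eq_trace, norm_xi hx]
  simp [Pproj, smul_smul, div_eq_inv_mul]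

/-- For `x = [[λ, -μ̄],[μ, λ̄]] ∈ SU(2)`, the operator norm (with respect to
the Hilbert–Schmidt/Frobenius norm on `M₂(ℂ)`) of the product of the rank-one
projections `P^x_{11}` and `P^x_{22}` equals `||λ|² − |μ|²|`. -/
theorem opNorm_Pproj_one_one_mul_two_two
    (l m : ℂ) (hx : ‖l‖ ^ 2 + ‖m‖ ^ 2 = 1) :
    @Norm.norm _ (ContinuousLinearMap.hasOpNorm (σ₁₂ := RingHom.id ℂ))
      ((LinearMap.toContinuousLinearMap (Pproj l m 0 0)).comp
        (LinearMap.toContinuousLinearMap (Pproj l m 1 1))) =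
      |‖l‖ ^ 2 - ‖m‖ ^ 2| := by
  -- The maps of the statement carry `Matrix`'s default topology and module structure, the
  -- projections the Frobenius ones; they agree only up to defeq, which defeats `rw`.
  have h := congrArg (@Norm.norm _ (ContinuousLinearMap.hasOpNorm (σ₁₂ := RingHom.id ℂ)))
    (congrArg₂ ContinuousLinearMap.comp (toContinuousLinearMap_Pproj hx 0 0)
      (toContinuousLinearMap_Pproj hx 1 1))
  refine h.trans ((norm_starProjection_span_singleton_comp _ _).trans ?_)
  rw [inner_xi_zero_zero_xi_one_one, norm_xi hx, norm_xi hx, Real.mul_self_sqrt zero_le_two,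
    Complex.norm_real, Real.norm_eq_abs, abs_mul, abs_two, abs_sub_comm,
    mul_div_cancel_left₀ _ two_ne_zero]
end

section
/- Let X be a one-dimensional Peano continuum, Y ⊆ X a subcontinuum containing the core of X, and r : X → Y the first point map. If α is a path in X from a point x ∈ X \ Y to a point y ∈ Y, then r(image(α)) ⊆ image(α). -/
open unitInterval

/-- Covering dimension at most `n`: every open cover admits an open refinement
in which each point lies in at most `n + 1` members. -/
def CovDimLE (X : Type*) [TopologicalSpace X] (n : ℕ) : Prop :=
  ∀ U : Set (Set X), (∀ u ∈ U, IsOpen u) → ⋃₀ U = Set.univ →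
    ∃ V : Set (Set X), (∀ v ∈ V, IsOpen v) ∧ ⋃₀ V = Set.univ ∧
      (∀ v ∈ V, ∃ u ∈ U, v ⊆ u) ∧
      ∀ x : X, {v ∈ V | x ∈ v}.Finite ∧ {v ∈ V | x ∈ v}.ncard ≤ n + 1

/-- `Y` is a strong deformation retract of `X`: there is a homotopy from the
identity to a retraction onto `Y` fixing `Y` at all times. -/
def IsStrongDeformationRetract (X : Type*) [TopologicalSpace X] (Y : Set X) : Prop :=
  ∃ H : C(I × X, X),
    (∀ x, H (0, x) = x) ∧ (∀ x, H (1, x) ∈ Y) ∧ ∀ t, ∀ y ∈ Y, H (t, y) = y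

/-- `Y` is a deformation retract of `X`: there is a homotopy from the identity
to a retraction onto `Y`. -/
def IsDeformationRetractSet (X : Type*) [TopologicalSpace X] (Y : Set X) : Prop :=
  ∃ H : C(I × X, X),
    (∀ x, H (0, x) = x) ∧ (∀ x, H (1, x) ∈ Y) ∧ ∀ y ∈ Y, H (1, y) = y


/-! A point `w = α t` off `Y` is joined to `y ∈ Y` by the tail of `α`, and every path between
distinct points of a Hausdorff space contains an arc between them. By the first point property
`r w` lies on that arc, hence on `α`.

To find the arc inside a path `P` on `[0,1]`, take by Zorn's lemma a minimal closed
`K ⊆ [0,1]` containing `0` and `1` such that `P` agrees at the two ends of every gap of `K`.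
By minimality, `P` can only repeat a value on `K` across a gap, and `K` has no isolated points
inside `(0,1)`. Hence `K` carries an atomless finite measure charging every portion of it, whose
distribution function is constant exactly where `P` with the gaps cut out is. Factoring through
it yields an injective path. -/

open Set Filter Topology MeasureTheory
open scoped ENNReal

section LoopCut

variable {X : Type*} {P : ℝ → X} {K : Set ℝ}

/-- A closed `K ⊆ [0,1]` through `0` and `1` such that `P` takes the same value at both ends
of every gap of `K`: the parts of `P` over the gaps are loops that can be cut out. -/
structure IsLoopCut (P : ℝ → X) (K : Set ℝ) : Prop where
  subset_Icc : K ⊆ Icc 0 1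
  isClosed : IsClosed K
  zero_mem : 0 ∈ K
  one_mem : 1 ∈ K
  apply_eq_of_gap : ∀ a ∈ K, ∀ b ∈ K, a < b → K ∩ Ioo a b = ∅ → P a = P b

theorem isLoopCut_Icc (P : ℝ → X) : IsLoopCut P (Icc 0 1) where
  subset_Icc := subset_rfl
  isClosed := isClosed_Icc
  zero_mem := ⟨le_rfl, zero_le_one⟩
  one_mem := ⟨zero_le_one, le_rfl⟩
  apply_eq_of_gap a ha b hb hab hgap := by
    refine absurd hgap (Nonempty.ne_empty ⟨(a + b) / 2, ⟨?_, ?_⟩, ?_, ?_⟩) <;>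
      linarith [ha.1, hb.2]

theorem IsLoopCut.exists_apply_eq_across (hK : IsLoopCut P K) {a b a' b' : ℝ} (ha : a ∈ K)
    (hb : b ∈ K) (haa' : a ≤ a') (ha'b' : a' ≤ b') (hb'b : b' ≤ b) (hgap : K ∩ Icc a' b' = ∅) :
    ∃ u ∈ Icc a a', ∃ v ∈ Icc b' b, P u = P v := by
  have hu := (hK.isClosed.inter isClosed_Icc).csSup_mem ⟨a, ha, le_rfl, haa'⟩
    (bddAbove_Icc.mono inter_subset_right)
  have hv := (hK.isClosed.inter isClosed_Icc).csInf_mem ⟨b, hb, hb'b, le_rfl⟩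
    (bddBelow_Icc.mono inter_subset_right)
  set u := sSup (K ∩ Icc a a')
  set v := sInf (K ∩ Icc b' b)
  have notMem_gap : ∀ x ∈ K, x ∉ Icc a' b' := fun x hx h =>
    eq_empty_iff_forall_notMem.1 hgap x ⟨hx, h⟩
  have hua' : u < a' := lt_of_le_of_ne hu.2.2 fun h => notMem_gap u hu.1 ⟨h.ge, h ▸ ha'b'⟩
  have hb'v : b' < v := lt_of_le_of_ne hv.2.1 fun h => notMem_gap v hv.1 ⟨h ▸ ha'b', h.ge⟩
  refine ⟨u, hu.2, v, hv.2, hK.apply_eq_of_gap u hu.1 v hv.1 (by linarith) ?_⟩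
  refine eq_empty_iff_forall_notMem.2 fun x ⟨hx, hux, hxv⟩ => ?_
  by_cases hxa' : x ≤ a'
  · exact hux.not_ge (le_csSup (bddAbove_Icc.mono inter_subset_right)
      ⟨hx, hu.2.1.trans hux.le, hxa'⟩)
  by_cases hxb' : b' ≤ x
  · exact hxv.not_ge (csInf_le (bddBelow_Icc.mono inter_subset_right)
      ⟨hx, hxb', hxv.le.trans hv.2.2⟩)
  exact notMem_gap x hx ⟨le_of_not_ge hxa', le_of_not_ge hxb'⟩

theorem IsLoopCut.sInter [TopologicalSpace X] [T2Space X] (hP : Continuous P)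
    {c : Set (Set ℝ)} (hc : ∀ K ∈ c, IsLoopCut P K) (hchain : IsChain (· ⊆ ·) c)
    (hne : c.Nonempty) : IsLoopCut P (⋂₀ c) where
  subset_Icc := (sInter_subset_of_mem hne.some_mem).trans (hc _ hne.some_mem).subset_Icc
  isClosed := isClosed_sInter fun K hK => (hc K hK).isClosed
  zero_mem := mem_sInter.2 fun K hK => (hc K hK).zero_mem
  one_mem := mem_sInter.2 fun K hK => (hc K hK).one_mem
  apply_eq_of_gap a ha b hb hab hgap := by
    by_contra hPab
    obtain ⟨U, V, hU, hV, haU, hbV, hUV⟩ := t2_separation hPab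
    obtain ⟨εa, hεa, hballa⟩ :=
      Metric.mem_nhds_iff.1 (hP.continuousAt.preimage_mem_nhds (hU.mem_nhds haU))
    obtain ⟨εb, hεb, hballb⟩ :=
      Metric.mem_nhds_iff.1 (hP.continuousAt.preimage_mem_nhds (hV.mem_nhds hbV))
    rw [Real.ball_eq_Ioo] at hballa hballb
    obtain ⟨δ, hδ, hδa, hδb, hδab⟩ : ∃ δ : ℝ, 0 < δ ∧ δ < εa ∧ δ < εb ∧ 2 * δ ≤ b - a :=
      ⟨min (min εa εb) (b - a) / 2, by positivity, by grind, by grind, by grind⟩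
    -- the compact middle part misses `⋂₀ c`, hence already misses one member of the chain
    have hmiddle : Icc (a + δ) (b - δ) ∩ ⋂ J : c, (J : Set ℝ) = ∅ := by
      rw [← sInter_eq_iInter, inter_comm]
      exact subset_eq_empty (inter_subset_inter_right _ (Icc_subset_Ioo (by linarith)
        (by linarith))) hgap
    have : Nonempty c := hne.to_subtype
    obtain ⟨⟨J, hJ⟩, hJgap⟩ := isCompact_Icc.elim_directed_family_closed _
      (fun J : c => (hc J J.2).isClosed) hmiddle
      fun J J' => (hchain.total J.2 J'.2).elim (fun h => ⟨J, subset_rfl, h⟩)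
        (fun h => ⟨J', h, subset_rfl⟩)
    obtain ⟨u, hu, v, hv, huv⟩ := (hc J hJ).exists_apply_eq_across (a' := a + δ) (b' := b - δ)
      (ha J hJ) (hb J hJ) (by linarith) (by linarith) (by linarith) (by rwa [inter_comm])
    refine disjoint_left.1 hUV (hballa (Icc_subset_Ioo (by linarith) (by linarith) hu)) ?_
    rw [huv]
    exact hballb (Icc_subset_Ioo (by linarith) (by linarith) hv)

theorem exists_minimal_isLoopCut [TopologicalSpace X] [T2Space X] (hP : Continuous P) :
    ∃ K, Minimal (IsLoopCut P) K := by
  obtain ⟨K, -, hK⟩ := zorn_superset_nonempty {K | IsLoopCut P K}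
    (fun c hc hchain hne => ⟨⋂₀ c, IsLoopCut.sInter hP hc hchain hne,
      fun _ => sInter_subset_of_mem⟩) _ (isLoopCut_Icc P)
  exact ⟨K, hK⟩

theorem IsLoopCut.sdiff_Ioo (hK : IsLoopCut P K) {s t : ℝ} (hs : s ∈ K) (ht : t ∈ K)
    (hst : P s = P t) : IsLoopCut P (K \ Ioo s t) where
  subset_Icc := sdiff_subset.trans hK.subset_Icc
  isClosed := hK.isClosed.sdiff isOpen_Ioo
  zero_mem := ⟨hK.zero_mem, fun h => by linarith [h.1, (hK.subset_Icc hs).1]⟩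
  one_mem := ⟨hK.one_mem, fun h => by linarith [h.2, (hK.subset_Icc ht).2]⟩
  apply_eq_of_gap a ha b hb hab hgap := by
    by_cases hKab : K ∩ Ioo a b = ∅
    · exact hK.apply_eq_of_gap a ha.1 b hb.1 hab hKab
    -- a point of `K` in `(a, b)` must lie in the excised `(s, t)`, which forces `a = s, b = t`
    obtain ⟨v, hvK, hv⟩ := nonempty_iff_ne_empty.2 hKab
    have hnotMem : ∀ x ∈ K \ Ioo s t, x ∉ Ioo a b := fun x hx h =>
      eq_empty_iff_forall_notMem.1 hgap x ⟨hx, h⟩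
    have hvst : v ∈ Ioo s t := by_contra fun h => hnotMem v ⟨hvK, h⟩ hv
    have hsab := hnotMem s ⟨hs, fun h => lt_irrefl s h.1⟩
    have htab := hnotMem t ⟨ht, fun h => lt_irrefl t h.2⟩
    simp only [mem_Ioo, not_and_or, not_lt, Set.mem_sdiff] at hv hvst hsab htab ha hb
    obtain rfl : a = s := by grind
    obtain rfl : b = t := by grind
    exact hst

theorem inter_Ioo_eq_empty_of_minimal (hK : Minimal (IsLoopCut P) K) {s t : ℝ} (hs : s ∈ K)
    (ht : t ∈ K) (hst : P s = P t) : K ∩ Ioo s t = ∅ := by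
  have := hK.eq_of_subset (hK.1.sdiff_Ioo hs ht hst) sdiff_subset
  exact disjoint_iff_inter_eq_empty.1 (sdiff_eq_self_iff_disjoint.1 this).symm

end LoopCut

section LastBefore

variable {K : Set ℝ} {t x : ℝ}

noncomputable def lastBefore (K : Set ℝ) (t : ℝ) : ℝ := sSup (K ∩ Iic t)

noncomputable def firstAfter (K : Set ℝ) (t : ℝ) : ℝ := sInf (K ∩ Ici t)

theorem le_lastBefore (hx : x ∈ K) (hxt : x ≤ t) : x ≤ lastBefore K t :=
  le_csSup (bddAbove_Iic.mono inter_subset_right) ⟨hx, hxt⟩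

theorem firstAfter_le (hx : x ∈ K) (hxt : t ≤ x) : firstAfter K t ≤ x :=
  csInf_le (bddBelow_Ici.mono inter_subset_right) ⟨hx, hxt⟩

theorem lastBefore_mem (hK : IsClosed K) (hx : x ∈ K) (hxt : x ≤ t) :
    lastBefore K t ∈ K ∧ lastBefore K t ≤ t :=
  (hK.inter isClosed_Iic).csSup_mem ⟨x, hx, hxt⟩ (bddAbove_Iic.mono inter_subset_right)

theorem firstAfter_mem (hK : IsClosed K) (hx : x ∈ K) (hxt : t ≤ x) :
    firstAfter K t ∈ K ∧ t ≤ firstAfter K t :=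
  (hK.inter isClosed_Ici).csInf_mem ⟨x, hx, hxt⟩ (bddBelow_Ici.mono inter_subset_right)

theorem lastBefore_eq_self (hK : IsClosed K) (ht : t ∈ K) : lastBefore K t = t :=
  le_antisymm (lastBefore_mem hK ht le_rfl).2 (le_lastBefore ht le_rfl)

theorem inter_Ioo_lastBefore_firstAfter :
    K ∩ Ioo (lastBefore K t) (firstAfter K t) = ∅ := by
  refine eq_empty_iff_forall_notMem.2 fun x ⟨hx, h1, h2⟩ => ?_
  rcases le_total x t with hxt | htx
  · exact h1.not_ge (le_lastBefore hx hxt)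
  · exact h2.not_ge (firstAfter_le hx htx)

end LastBefore

section LoopCutTrace

variable {X : Type*} {P : ℝ → X} {K : Set ℝ} {t : ℝ}

theorem IsLoopCut.apply_lastBefore_eq_apply_firstAfter (hK : IsLoopCut P K)
    (ht : t ∈ Icc (0 : ℝ) 1) : P (lastBefore K t) = P (firstAfter K t) := by
  have h₁ := lastBefore_mem hK.isClosed hK.zero_mem ht.1
  have h₂ := firstAfter_mem hK.isClosed hK.one_mem ht.2
  rcases (h₁.2.trans h₂.2).eq_or_lt with h | h
  · rw [h]
  · exact hK.apply_eq_of_gap _ h₁.1 _ h₂.1 h inter_Ioo_lastBefore_firstAfter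

theorem IsLoopCut.continuousOn_apply_lastBefore [TopologicalSpace X] (hK : IsLoopCut P K)
    (hP : Continuous P) : ContinuousOn (fun t => P (lastBefore K t)) (Icc 0 1) := by
  intro t₀ ht₀
  by_cases ht₀K : t₀ ∈ K
  · -- on `[0,1]` the function is `P ∘ h` for some `h` squeezed between `t` and `t₀`
    set h : ℝ → ℝ := fun t => if t₀ ≤ t then lastBefore K t else firstAfter K t
    have hPh : EqOn (fun t => P (lastBefore K t)) (P ∘ h) (Icc 0 1) := fun t ht => by
      by_cases htt₀ : t₀ ≤ t
      · simp [h, htt₀]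
      · simp [h, htt₀, hK.apply_lastBefore_eq_apply_firstAfter ht]
    have hh : ∀ t, h t ∈ Icc (min t t₀) (max t t₀) := fun t => by
      by_cases htt₀ : t₀ ≤ t
      · simp only [h, htt₀, if_true, min_eq_right htt₀, max_eq_left htt₀]
        exact ⟨le_lastBefore ht₀K htt₀, (lastBefore_mem hK.isClosed ht₀K htt₀).2⟩
      · have ht_le : t ≤ t₀ := le_of_not_ge htt₀
        simp only [h, if_neg htt₀, min_eq_left ht_le, max_eq_right ht_le]
        exact ⟨(firstAfter_mem hK.isClosed ht₀K ht_le).2, firstAfter_le ht₀K ht_le⟩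
    have htendsto : Tendsto h (𝓝 t₀) (𝓝 t₀) :=
      tendsto_of_tendsto_of_tendsto_of_le_of_le
        ((continuous_id.min continuous_const).tendsto' t₀ t₀ (min_self t₀))
        ((continuous_id.max continuous_const).tendsto' t₀ t₀ (max_self t₀))
        (fun t => (hh t).1) (fun t => (hh t).2)
    have hh_cont : ContinuousAt h t₀ := by
      rwa [ContinuousAt, show h t₀ = t₀ by simp [h, lastBefore_eq_self hK.isClosed ht₀K]]
    exact (hP.continuousAt.comp hh_cont).continuousWithinAt.congr hPh (hPh ht₀)
  · -- inside a gap of `K` the function is locally constant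
    have h₁ := lastBefore_mem hK.isClosed hK.zero_mem ht₀.1
    have h₂ := firstAfter_mem hK.isClosed hK.one_mem ht₀.2
    have hlt : lastBefore K t₀ < t₀ := h₁.2.lt_of_ne fun h => ht₀K (h ▸ h₁.1)
    have hgt : t₀ < firstAfter K t₀ := h₂.2.lt_of_ne fun h => ht₀K (h.symm ▸ h₂.1)
    refine ((continuousAt_const (y := P (lastBefore K t₀))).congr ?_).continuousWithinAt
    filter_upwards [Ioo_mem_nhds hlt hgt] with t ht
    have h₃ := lastBefore_mem hK.isClosed h₁.1 ht.1.le
    refine congrArg P ((le_lastBefore h₁.1 ht.1.le).eq_or_lt.resolve_right fun h => ?_)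
    exact eq_empty_iff_forall_notMem.1 inter_Ioo_lastBefore_firstAfter _
      ⟨h₃.1, h, h₃.2.trans_lt ht.2⟩

end LoopCutTrace

section MinimalLoopCut

variable {X : Type*} {P : ℝ → X} {K : Set ℝ} {s t x : ℝ}

theorem accPt_of_minimal_isLoopCut (hK : Minimal (IsLoopCut P) K) (hx : x ∈ K)
    (hx0 : 0 < x) (hx1 : x < 1) : AccPt x (𝓟 K) := by
  by_contra hacc
  rw [accPt_iff_nhds] at hacc
  push Not at hacc
  obtain ⟨U, hU, hUK⟩ := hacc
  obtain ⟨ε, hε, hεU⟩ := Metric.mem_nhds_iff.1 hU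
  rw [Real.ball_eq_Ioo] at hεU
  obtain ⟨δ, hδ, hδε, hδx, hδx'⟩ : ∃ δ : ℝ, 0 < δ ∧ δ < ε ∧ δ ≤ x ∧ x + δ ≤ 1 :=
    ⟨min ε (min x (1 - x)) / 2, by grind, by grind, by grind, by grind⟩
  have hKU : ∀ y ∈ K, y ∈ Ioo (x - ε) (x + ε) → y = x := fun y hy hyU => hUK y ⟨hεU hyU, hy⟩
  have hu := lastBefore_mem hK.1.isClosed hK.1.zero_mem (t := x - δ) (by linarith)
  have hv := firstAfter_mem hK.1.isClosed hK.1.one_mem (t := x + δ) hδx'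
  have hgap_left : K ∩ Ioo (lastBefore K (x - δ)) x = ∅ := by
    refine eq_empty_iff_forall_notMem.2 fun y ⟨hy, h₁, h₂⟩ => ?_
    by_cases hyδ : y ≤ x - δ
    · exact h₁.not_ge (le_lastBefore hy hyδ)
    · exact h₂.ne (hKU y hy ⟨by linarith, by linarith⟩)
  have hgap_right : K ∩ Ioo x (firstAfter K (x + δ)) = ∅ := by
    refine eq_empty_iff_forall_notMem.2 fun y ⟨hy, h₁, h₂⟩ => ?_
    by_cases hyδ : x + δ ≤ y
    · exact h₂.not_ge (firstAfter_le hy hyδ)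
    · exact h₁.ne' (hKU y hy ⟨by linarith, by linarith⟩)
  have hPuv : P (lastBefore K (x - δ)) = P (firstAfter K (x + δ)) :=
    (hK.1.apply_eq_of_gap _ hu.1 _ hx (by linarith) hgap_left).trans
      (hK.1.apply_eq_of_gap _ hx _ hv.1 (by linarith) hgap_right)
  exact eq_empty_iff_forall_notMem.1 (inter_Ioo_eq_empty_of_minimal hK hu.1 hv.1 hPuv) x
    ⟨hx, by linarith, by linarith⟩

theorem preperfect_inter_Ioo_of_minimal_isLoopCut (hK : Minimal (IsLoopCut P) K) :
    Preperfect (K ∩ Ioo 0 1) := by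
  intro x ⟨hxK, hx⟩
  rw [accPt_iff_nhds]
  intro U hU
  obtain ⟨y, ⟨⟨hyU, hy⟩, hyK⟩, hyx⟩ := accPt_iff_nhds.1
    (accPt_of_minimal_isLoopCut hK hxK hx.1 hx.2) _ (inter_mem hU (isOpen_Ioo.mem_nhds hx))
  exact ⟨y, ⟨hyU, hyK, hy⟩, hyx⟩

theorem apply_lastBefore_eq_iff_of_minimal (hK : Minimal (IsLoopCut P) K) (hs : 0 ≤ s)
    (hst : s ≤ t) :
    P (lastBefore K s) = P (lastBefore K t) ↔
      K ∩ Ioo (lastBefore K s) (lastBefore K t) = ∅ := by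
  have hρs := lastBefore_mem hK.1.isClosed hK.1.zero_mem hs
  have hρt := lastBefore_mem hK.1.isClosed hK.1.zero_mem (hs.trans hst)
  refine ⟨inter_Ioo_eq_empty_of_minimal hK hρs.1 hρt.1, fun hgap => ?_⟩
  rcases (le_lastBefore hρs.1 (hρs.2.trans hst)).eq_or_lt with h | h
  · rw [h]
  · exact hK.1.apply_eq_of_gap _ hρs.1 _ hρt.1 h hgap

end MinimalLoopCut

theorem Perfect.exists_atomless_probabilityMeasure {α : Type*} [MetricSpace α] [CompleteSpace α]
    [SecondCountableTopology α] [MeasurableSpace α] [BorelSpace α] {D : Set α}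
    (hD : Perfect D) (hne : D.Nonempty) :
    ∃ μ : Measure α, IsProbabilityMeasure μ ∧ NullSingletonClass μ ∧ μ Dᶜ = 0 := by
  have hunc : ¬Countable D := by
    obtain ⟨f, hfD, -, hfinj⟩ := hD.exists_nat_bool_injection hne
    have hnat_bool : ¬Countable (ℕ → Bool) := by
      rw [← Cardinal.mk_le_aleph0_iff]
      simpa using Cardinal.aleph0_lt_continuum
    exact fun h => hnat_bool (Function.Injective.countable
      (f := fun z => (⟨f z, hfD ⟨z, rfl⟩⟩ : D)) fun a b hab => hfinj (congrArg Subtype.val hab))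
  have : PolishSpace D := hD.closed.polishSpace
  -- push Lebesgue measure on `[0,1]` into `D` along a Borel isomorphism `ℝ ≃ D`
  let e : ℝ ≃ᵐ D := PolishSpace.measurableEquivOfNotCountable not_countable hunc
  have he : Measurable fun r => (e r : α) := measurable_subtype_coe.comp e.measurable
  refine ⟨(volume.restrict (Icc (0 : ℝ) 1)).map fun r => (e r : α), ?_, ⟨fun x => ?_⟩, ?_⟩
  · refine ⟨?_⟩
    rw [Measure.map_apply he MeasurableSet.univ, preimage_univ, Measure.restrict_apply_univ,
      Real.volume_Icc, sub_zero, ENNReal.ofReal_one]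
  · rw [Measure.map_apply he (measurableSet_singleton x)]
    refine Subsingleton.measure_zero (fun r hr r' hr' => e.injective ?_) _
    exact Subtype.val_injective (hr.trans hr'.symm)
  · rw [Measure.map_apply he hD.closed.isOpen_compl.measurableSet]
    convert measure_empty (μ := volume.restrict (Icc (0 : ℝ) 1))
    exact eq_empty_iff_forall_notMem.2 fun r hr => hr (e r).2

theorem Preperfect.exists_atomless_measure_pos_Ioo {S : Set ℝ} (hS : Preperfect S) :
    ∃ μ : Measure ℝ, IsFiniteMeasure μ ∧ NullSingletonClass μ ∧ μ (closure S)ᶜ = 0 ∧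
      ∀ a b, (S ∩ Ioo a b).Nonempty → 0 < μ (Ioo a b) := by
  -- one atomless probability measure on each rational portion of `S`, summed with small weights
  let J := {j : ℚ × ℚ // (S ∩ Ioo (j.1 : ℝ) j.2).Nonempty}
  have piece (j : J) : ∃ m : Measure ℝ, IsProbabilityMeasure m ∧ NullSingletonClass m ∧
      m (closure (S ∩ Ioo (j.1.1 : ℝ) j.1.2))ᶜ = 0 := by
    have hpre := (hS.open_inter (isOpen_Ioo (a := (j.1.1 : ℝ)) (b := j.1.2)))
    rw [inter_comm] at hpre
    exact hpre.perfect_closure.exists_atomless_probabilityMeasure (j.2.mono subset_closure)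
  choose m hm_prob hm_atom hm_supp using piece
  obtain ⟨w, hw_pos, hw_sum⟩ := ENNReal.exists_pos_sum_of_countable' one_ne_zero J
  have hμ (A : Set ℝ) (hA : MeasurableSet A) :
      Measure.sum (fun j => w j • m j) A = ∑' j, w j * m j A := by
    simp [Measure.sum_apply _ hA]
  refine ⟨Measure.sum fun j => w j • m j, ⟨?_⟩, ⟨fun x => ?_⟩, ?_, ?_⟩
  · rw [hμ _ MeasurableSet.univ]
    simpa using hw_sum.trans ENNReal.one_lt_top
  · simp [hμ _ (measurableSet_singleton x)]
  · rw [hμ _ isClosed_closure.isOpen_compl.measurableSet]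
    refine ENNReal.tsum_eq_zero.2 fun j => ?_
    rw [measure_mono_null (compl_subset_compl.2 (closure_mono inter_subset_left))
      (hm_supp j), mul_zero]
  · rintro a b ⟨x, hxS, hax, hxb⟩
    obtain ⟨q, haq, hqx⟩ := exists_rat_btwn hax
    obtain ⟨q', hxq', hq'b⟩ := exists_rat_btwn hxb
    let j : J := ⟨(q, q'), x, hxS, hqx, hxq'⟩
    have hmj : m j (Ioo a b) = 1 := by
      rw [← prob_compl_eq_zero_iff measurableSet_Ioo]
      refine measure_mono_null (compl_subset_compl.2 ?_) (hm_supp j)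
      exact (closure_minimal (inter_subset_right.trans Ioo_subset_Icc_self) isClosed_Icc).trans
        (Icc_subset_Ioo haq hq'b)
    calc (0 : ℝ≥0∞) < (w j • m j) (Ioo a b) := by simp [hmj, hw_pos j]
      _ ≤ _ := Measure.le_sum (fun j => w j • m j) j _

theorem measureReal_Iic_add_measureReal_Ioc (μ : Measure ℝ) [IsFiniteMeasure μ] {s t : ℝ}
    (hst : s ≤ t) : μ.real (Iic s) + μ.real (Ioc s t) = μ.real (Iic t) := by
  rw [← measureReal_union (Iic_disjoint_Ioc le_rfl) measurableSet_Ioc, Iic_union_Ioc_eq_Iic hst]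

theorem continuous_measureReal_Iic (μ : Measure ℝ) [IsFiniteMeasure μ] [NullSingletonClass μ] :
    Continuous fun t => μ.real (Iic t) := by
  refine continuous_iff_continuousAt.2 fun t => ?_
  have hbound (s : ℝ) :
      dist (μ.real (Iic s)) (μ.real (Iic t)) ≤ μ.real (Icc (t - dist s t) (t + dist s t)) := by
    rcases le_total s t with h | h
    · rw [← measureReal_Iic_add_measureReal_Ioc μ h, dist_comm, Real.dist_eq,
        add_sub_cancel_left, abs_of_nonneg measureReal_nonneg]
      refine measureReal_mono fun x hx => ?_
      rw [mem_Icc, Real.dist_eq, abs_of_nonpos (by linarith)]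
      exact ⟨by linarith [hx.1], by linarith [hx.2]⟩
    · rw [← measureReal_Iic_add_measureReal_Ioc μ h, Real.dist_eq, add_sub_cancel_left,
        abs_of_nonneg measureReal_nonneg]
      refine measureReal_mono fun x hx => ?_
      rw [mem_Icc, Real.dist_eq, abs_of_nonneg (by linarith)]
      exact ⟨by linarith [hx.1], by linarith [hx.2]⟩
  have hdist : Tendsto (fun s => dist s t) (𝓝 t) (𝓝 0) :=
    (continuous_id.dist continuous_const).tendsto' t 0 (dist_self t)
  rw [ContinuousAt, tendsto_iff_dist_tendsto_zero]
  refine squeeze_zero (fun _ => dist_nonneg) hbound ?_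
  simpa [Function.comp_def, measureReal_def] using
    (ENNReal.tendsto_toReal ENNReal.zero_ne_top).comp ((tendsto_measure_Icc μ t).comp hdist)

theorem measureReal_Iic_eq_iff (μ : Measure ℝ) [IsFiniteMeasure μ] {s t : ℝ} (hst : s ≤ t) :
    μ.real (Iic s) = μ.real (Iic t) ↔ μ (Ioc s t) = 0 := by
  rw [← measureReal_Iic_add_measureReal_Ioc μ hst, left_eq_add, measureReal_eq_zero_iff]

theorem measure_Ioc_eq_zero_iff_inter_Ioo_lastBefore {μ : Measure ℝ} [NullSingletonClass μ]
    {K : Set ℝ} (hK : IsClosed K) (h0 : 0 ∈ K) (hμK : μ Kᶜ = 0)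
    (hμpos : ∀ a b, (K ∩ Ioo 0 1 ∩ Ioo a b).Nonempty → 0 < μ (Ioo a b))
    {s t : ℝ} (hs : 0 ≤ s) (hst : s ≤ t) (ht : t ≤ 1) :
    μ (Ioc s t) = 0 ↔ K ∩ Ioo (lastBefore K s) (lastBefore K t) = ∅ := by
  have hρs := lastBefore_mem hK h0 hs
  have hρt := lastBefore_mem hK h0 (hs.trans hst)
  have hρs0 := le_lastBefore h0 hs
  rw [← measure_inter_conull hμK]
  constructor
  · intro hnull
    refine eq_empty_iff_forall_notMem.2 fun x ⟨hxK, hρx, hxρ⟩ => ?_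
    have hpos := hμpos _ _ ⟨x, ⟨hxK, by linarith, by linarith⟩, hρx, hxρ⟩
    rw [← measure_inter_conull hμK] at hpos
    refine hpos.ne' (measure_mono_null (t := Ioc s t ∩ K)
      (fun y ⟨⟨hρy, hyρ⟩, hyK⟩ => ⟨⟨?_, ?_⟩, hyK⟩) hnull)
    · exact lt_of_not_ge fun hys => hρy.not_ge (le_lastBefore hyK hys)
    · linarith
  · intro hgap
    -- the only point of `K` in `(s, t]` can be `lastBefore K t`
    refine measure_mono_null (fun y ⟨⟨hsy, hyt⟩, hyK⟩ => ?_)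
      (measure_singleton (lastBefore K t))
    refine (le_lastBefore hyK hyt).lt_or_eq.resolve_left fun hyρ => ?_
    exact eq_empty_iff_forall_notMem.1 hgap y ⟨hyK, hρs.2.trans_lt hsy, hyρ⟩

theorem Topology.IsQuotientMap.exists_injective_comp_eq {A B Y : Type*} [TopologicalSpace A]
    [TopologicalSpace B] [TopologicalSpace Y] {F : A → B} (hF : IsQuotientMap F) {g : A → Y}
    (hg : Continuous g) (hfib : ∀ a a', F a = F a' ↔ g a = g a') :
    ∃ Q : C(B, Y), Function.Injective Q ∧ ∀ a, Q (F a) = g a := by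
  let sec := Function.surjInv hF.surjective
  have hsec (b : B) : F (sec b) = b := Function.surjInv_eq hF.surjective b
  have hQF (a : A) : g (sec (F a)) = g a := (hfib _ _).1 (hsec (F a))
  refine ⟨⟨g ∘ sec, ?_⟩, fun b b' h => ?_, hQF⟩
  · rw [hF.continuous_iff]
    exact hg.congr fun a => (hQF a).symm
  · rw [← hsec b, ← hsec b']
    exact (hfib _ _).2 h

theorem exists_injective_path_of_fibers {X : Type*} [TopologicalSpace X] {g : I → X}
    (hg : Continuous g) {f : ℝ → ℝ} (hf : Continuous f) (hf_mono : Monotone f)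
    (hfib : ∀ u v : I, f u = f v ↔ g u = g v) (hg01 : g 0 ≠ g 1) :
    ∃ q : Path (g 0) (g 1), Function.Injective q ∧ range q ⊆ range g := by
  have hf01 : f 0 < f 1 :=
    (hf_mono zero_le_one).lt_of_ne fun h => hg01 ((hfib 0 1).1 h)
  -- `f` maps `[0,1]` onto `[f 0, f 1]` with the same fibres as `g`; `g` factors through it
  let F : I → Icc (f 0) (f 1) := fun u => ⟨f u, hf_mono u.2.1, hf_mono u.2.2⟩
  have hF_surj : Function.Surjective F := fun y => by
    obtain ⟨u, hu, hfu⟩ := intermediate_value_Icc zero_le_one hf.continuousOn y.2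
    exact ⟨⟨u, hu⟩, Subtype.ext hfu⟩
  have hF : IsQuotientMap F :=
    .of_surjective_continuous hF_surj ((hf.comp continuous_subtype_val).subtype_mk _)
  obtain ⟨Q, hQ_inj, hQF⟩ := hF.exists_injective_comp_eq hg fun u v => by
    rw [← hfib, Subtype.ext_iff]
  let e := (iccHomeoI (f 0) (f 1) hf01).symm
  have hQ0 : Q (e 0) = g 0 := by
    rw [← hQF]; congr 1; ext; simp [e, F, iccHomeoI_symm_apply_coe]
  have hQ1 : Q (e 1) = g 1 := by
    rw [← hQF]; congr 1; ext; simp [e, F, iccHomeoI_symm_apply_coe]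
  refine ⟨⟨Q.comp e, hQ0, hQ1⟩, hQ_inj.comp e.injective, ?_⟩
  rintro _ ⟨u, rfl⟩
  obtain ⟨w, hw⟩ := hF_surj (e u)
  exact ⟨w, by simp [← hw, hQF]⟩

theorem Path.exists_injective_range_subset {X : Type*} [TopologicalSpace X] [T2Space X]
    {a b : X} (γ : Path a b) (hab : a ≠ b) :
    ∃ q : Path a b, Function.Injective q ∧ range q ⊆ range γ := by
  obtain ⟨K, hK⟩ := exists_minimal_isLoopCut γ.continuous_extend
  obtain ⟨μ, hμ_fin, hμ_atom, hμS, hμ_pos⟩ :=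
    (preperfect_inter_Ioo_of_minimal_isLoopCut hK).exists_atomless_measure_pos_Ioo
  have hμK : μ Kᶜ = 0 := measure_mono_null
    (compl_subset_compl.2 (closure_minimal inter_subset_left hK.1.isClosed)) hμS
  let g : I → X := fun u => γ.extend (lastBefore K u)
  have hfib (u v : I) : μ.real (Iic u) = μ.real (Iic v) ↔ g u = g v := by
    wlog huv : u ≤ v generalizing u v
    · exact eq_comm.trans ((this v u (le_of_not_ge huv)).trans eq_comm)
    rw [measureReal_Iic_eq_iff μ huv, measure_Ioc_eq_zero_iff_inter_Ioo_lastBefore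
      hK.1.isClosed hK.1.zero_mem hμK hμ_pos u.2.1 huv v.2.2,
      ← apply_lastBefore_eq_iff_of_minimal hK u.2.1 huv]
  have hg : Continuous g :=
    (hK.1.continuousOn_apply_lastBefore γ.continuous_extend).comp_continuous
      continuous_subtype_val fun u => u.2
  have hg0 : g 0 = a := by simp [g, lastBefore_eq_self hK.1.isClosed hK.1.zero_mem]
  have hg1 : g 1 = b := by simp [g, lastBefore_eq_self hK.1.isClosed hK.1.one_mem]
  obtain ⟨q, hq_inj, hq_range⟩ := exists_injective_path_of_fibers hg
    (continuous_measureReal_Iic μ) (fun s t hst => measureReal_mono (Iic_subset_Iic.2 hst))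
    hfib (by rwa [hg0, hg1])
  refine ⟨q.cast hg0.symm hg1.symm, hq_inj, ?_⟩
  rintro _ ⟨u, rfl⟩
  obtain ⟨w, hw⟩ := hq_range ⟨u, rfl⟩
  have hρw := lastBefore_mem hK.1.isClosed hK.1.zero_mem w.2.1
  exact ⟨⟨_, hK.1.subset_Icc hρw.1⟩, (γ.extend_apply _).symm.trans hw⟩

theorem firstPointMap_image_path_subset_general
    (X : Type) [MetricSpace X]
    (Y : Set X)
    (r : X → X)
    (hrfix : ∀ y ∈ Y, r y = y)
    (hfp : ∀ x ∉ Y, ∀ z ∈ Y, ∀ p : Path x z, Function.Injective ⇑p →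
      r x ∈ Set.range ⇑p)
    (x y : X) (hy : y ∈ Y) (α : Path x y) :
    r '' Set.range ⇑α ⊆ Set.range ⇑α := by
  rintro _ ⟨_, ⟨t, rfl⟩, rfl⟩
  by_cases ht : α t ∈ Y
  · rw [hrfix _ ht]
    exact mem_range_self t
  have hy' : α 1 ∈ Y := by simpa using hy
  obtain ⟨q, hq_inj, hq_range⟩ :=
    (α.subpath t 1).exists_injective_range_subset fun h => ht (h ▸ hy')
  have hsub : range (α.subpath t 1) ⊆ range α := by
    rw [Path.range_subpath]
    exact image_subset_range _ _
  exact hsub (hq_range (hfp _ ht _ hy' q hq_inj))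

/-- Lemma on first point maps in one-dimensional Peano continua: if `Y` is a
subcontinuum containing the core, `r` the first point map onto `Y`, and `α` a
path from `x ∈ X \ Y` to `y ∈ Y`, then `r(image α) ⊆ image α`. -/
theorem firstPointMap_image_path_subset
    (X : Type) [MetricSpace X] [CompactSpace X] [ConnectedSpace X]
    [LocallyConnectedSpace X] (hdim : CovDimLE X 1)
    (Y : Set X) (hYc : IsClosed Y) (hYconn : IsPreconnected Y) (hYne : Y.Nonempty)
    (hcore : ∃ K : Set X, K ⊆ Y ∧ IsStrongDeformationRetract X K ∧
      ∀ D ⊆ K, IsDeformationRetractSet X D → D = K)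
    (r : X → X) (hrc : Continuous r) (hrY : ∀ x, r x ∈ Y)
    (hrfix : ∀ y ∈ Y, r y = y)
    (hfp : ∀ x ∉ Y, ∀ z ∈ Y, ∀ p : Path x z, Function.Injective ⇑p →
      r x ∈ Set.range ⇑p)
    (x y : X) (hx : x ∉ Y) (hy : y ∈ Y) (α : Path x y) :
    r '' Set.range ⇑α ⊆ Set.range ⇑α :=
  firstPointMap_image_path_subset_general X Y r hrfix hfp x y hy α
end

section
/- For n ∈ {1, 2, 3}, the quantum permutation algebra A_s(n), i.e., the universal C*-algebra generated by n² projections u_{ij} (1 ≤ i,j ≤ n) subject to u_{ij} = u_{ij}* = u_{ij}² and Σ_j u_{ij} = 1 = Σ_i u_{ij} for all i, j, is commutative and isomorphic to ℂ^{n!}. -/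
/-!
For `n ≤ 3` the relations force the generators to commute. Two of at most three projections
summing to `1` have idempotent sum, hence are orthogonal, so every row and column of `u` is a
partition of unity by orthogonal projections. For `i ≠ k` and `j ≠ l` the third row index `i'`
satisfies `u k l = 1 - u i l - u i' l`, which gives `u i j * u k l = u i j * u k l * u i j`;
the right side is self-adjoint, so `u i j` and `u k l` commute.

For commuting entries the products `u_σ = ∏ i, u i (σ i)`, `σ ∈ Sₙ`, form a partition of unity
by orthogonal projections with `∑_{σ i = j} u_σ = u i j`. Hence `f ↦ ∑ σ, f σ • u_σ` is a
⋆-homomorphism `C(Sₙ) → A` sending the coordinate `σ ↦ [σ i = j]` to `u i j`. It is inverse to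
the map `A → C(Sₙ)` given by universality: one composite is the identity by uniqueness, the
other because the coordinates generate `C(Sₙ)`.
-/

open Finset

section TorsionFree

variable {R : Type*} [Ring R] [IsAddTorsionFree R]

theorem IsIdempotentElem.mul_eq_zero_of_add {p q : R} (hp : IsIdempotentElem p)
    (hq : IsIdempotentElem q) (hpq : IsIdempotentElem (p + q)) : p * q = 0 :=
  hp.mul_eq_zero_of_anticommute ((hp.add_iff hq).mp hpq)

theorem CompleteOrthogonalIdempotents.of_card_le_three {ι : Type*} [Fintype ι]
    (hι : Fintype.card ι ≤ 3) {e : ι → R} (he : ∀ i, IsIdempotentElem (e i))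
    (hsum : ∑ i, e i = 1) : CompleteOrthogonalIdempotents e := by
  classical
  refine ⟨⟨he, fun i j hij => (he i).mul_eq_zero_of_add (he j) ?_⟩, hsum⟩
  have hrest : IsIdempotentElem (∑ k ∈ {i, j}ᶜ, e k) := by
    have hcard : ({i, j}ᶜ : Finset ι).card ≤ 1 := by
      rw [card_compl, card_pair hij]; omega
    obtain h | h := Nat.le_one_iff_eq_zero_or_eq_one.mp hcard
    · rw [card_eq_zero.mp h, sum_empty]
      exact .zero
    · obtain ⟨k, hk⟩ := card_eq_one.mp h
      rw [hk, sum_singleton]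
      exact he k
  have hij : e i + e j = 1 - ∑ k ∈ {i, j}ᶜ, e k := by
    rw [← hsum, ← sum_add_sum_compl {i, j} e, sum_pair hij, add_sub_cancel_right]
  rw [hij]
  exact hrest.one_sub

end TorsionFree

section Commute

variable {R ι : Type*} [Ring R] [Fintype ι] {u : ι → ι → R}

theorem mul_mul_eq_zero_of_card_le_three (hι : Fintype.card ι ≤ 3)
    (hrow : ∀ i, OrthogonalIdempotents (u i)) (hcol : ∀ j, CompleteOrthogonalIdempotents (u · j))
    {i j k l i' : ι} (hik : i ≠ k) (hjl : j ≠ l) (hi' : i' ≠ i) :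
    u i j * u k l * u i' j = 0 := by
  classical
  obtain rfl | hki' := eq_or_ne i' k
  · rw [mul_assoc, (hrow i').ortho hjl.symm, mul_zero]
  have huniv : ({i, k, i'} : Finset ι) = univ :=
    eq_univ_of_card _ <| le_antisymm (card_le_univ _) <| by
      rw [card_eq_three.mpr ⟨i, k, i', hik, hi'.symm, hki'.symm, rfl⟩]; exact hι
  have hk : u k l = 1 - u i l - u i' l := by
    have := (hcol l).complete
    rw [← huniv, sum_insert (by simp [hik, hi'.symm]), sum_pair hki'.symm] at this
    rw [← this]; abel
  calc u i j * u k l * u i' j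
      = u i j * u i' j - u i j * u i l * u i' j - u i j * (u i' l * u i' j) := by
        rw [hk]; noncomm_ring
    _ = 0 := by
        rw [(hcol j).ortho hi'.symm, (hrow i).ortho hjl, (hrow i').ortho hjl.symm]; simp

theorem commute_of_card_le_three [StarRing R] (hι : Fintype.card ι ≤ 3)
    (hself : ∀ i j, IsSelfAdjoint (u i j)) (hrow : ∀ i, CompleteOrthogonalIdempotents (u i))
    (hcol : ∀ j, CompleteOrthogonalIdempotents (u · j)) (i j k l : ι) :
    Commute (u i j) (u k l) := by
  obtain rfl | hik := eq_or_ne i k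
  · obtain rfl | hjl := eq_or_ne j l
    · exact .refl _
    · exact ((hrow i).ortho hjl).trans ((hrow i).ortho hjl.symm).symm
  obtain rfl | hjl := eq_or_ne j l
  · exact ((hcol j).ortho hik).trans ((hcol j).ortho hik.symm).symm
  have hsandwich : u i j * u k l = u i j * u k l * u i j := by
    calc u i j * u k l = ∑ i', u i j * u k l * u i' j := by
          rw [← mul_sum, (hcol j).complete, mul_one]
      _ = u i j * u k l * u i j :=
          sum_eq_single i (fun _ _ hi' => mul_mul_eq_zero_of_card_le_three hι
            (fun i => (hrow i).toOrthogonalIdempotents) hcol hik hjl hi') (by simp)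
  have hsa : IsSelfAdjoint (u i j * u k l * u i j) := by
    simpa only [(hself i j).star_eq] using (hself k l).conjugate (u i j)
  calc u i j * u k l = star (u i j * u k l * u i j) := hsandwich.trans hsa.star_eq.symm
    _ = star (u i j * u k l) := by rw [← hsandwich]
    _ = u k l * u i j := by rw [star_mul, (hself i j).star_eq, (hself k l).star_eq]

end Commute

def CompleteOrthogonalIdempotents.piStarAlgHom {𝕜 R κ : Type*} [CommSemiring 𝕜] [StarRing 𝕜]
    [Semiring R] [Algebra 𝕜 R] [StarRing R] [StarModule 𝕜 R] [Fintype κ] {e : κ → R}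
    (he : CompleteOrthogonalIdempotents e) (hself : ∀ k, IsSelfAdjoint (e k)) :
    (κ → 𝕜) →⋆ₐ[𝕜] R where
  toFun f := ∑ k, f k • e k
  map_one' := by simpa using he.complete
  map_mul' f g := by
    classical
    simp_rw [sum_mul_sum, smul_mul_smul_comm, he.mul_eq, smul_ite, smul_zero, sum_ite_eq,
      mem_univ, if_true, Pi.mul_apply]
  map_zero' := by simp
  map_add' f g := by simp [add_smul, sum_add_distrib]
  commutes' c := by simp [Algebra.algebraMap_eq_smul_one, ← smul_sum, he.complete]
  map_star' f := by simp [star_sum, star_smul, (hself _).star_eq]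

section PermProd

variable {R ι : Type*} [Fintype ι]

def permProd [CommMonoid R] (u : ι → ι → R) (σ : Equiv.Perm ι) : R := ∏ i, u i (σ i)

theorem IsSelfAdjoint.permProd [CommSemiring R] [StarRing R] {u : ι → ι → R}
    (hself : ∀ i j, IsSelfAdjoint (u i j)) (σ : Equiv.Perm ι) : IsSelfAdjoint (permProd u σ) := by
  rw [IsSelfAdjoint, _root_.permProd, star_prod]
  exact prod_congr rfl fun i _ => (hself i (σ i)).star_eq

variable [DecidableEq ι] [CommSemiring R] {u : ι → ι → R}

theorem prod_eq_zero_of_not_injective (hcol : ∀ j, OrthogonalIdempotents (u · j))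
    {g : ι → ι} (hg : ¬ Function.Injective g) : ∏ i, u i (g i) = 0 := by
  obtain ⟨a, b, hab, hne⟩ : ∃ a b, g a = g b ∧ a ≠ b := by
    simpa [Function.Injective] using hg
  rw [← mul_prod_erase univ _ (mem_univ a),
    ← mul_prod_erase _ _ (mem_erase.mpr ⟨hne.symm, mem_univ b⟩), ← mul_assoc, hab,
    (hcol (g b)).ortho hne, zero_mul]

theorem completeOrthogonalIdempotents_permProd (hrow : ∀ i, CompleteOrthogonalIdempotents (u i))
    (hcol : ∀ j, OrthogonalIdempotents (u · j)) :
    CompleteOrthogonalIdempotents (permProd u) where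
  idem σ := by
    rw [IsIdempotentElem, permProd, ← prod_mul_distrib]
    exact prod_congr rfl fun i _ => ((hrow i).idem (σ i)).eq
  ortho σ τ hστ := by
    obtain ⟨i, hi⟩ : ∃ i, σ i ≠ τ i := by
      by_contra! h
      exact hστ (Equiv.ext h)
    rw [permProd, permProd, ← prod_mul_distrib]
    exact prod_eq_zero (mem_univ i) ((hrow i).ortho hi)
  complete := by
    calc ∑ σ, permProd u σ = ∑ g : ι → ι, ∏ i, u i (g i) :=
          Fintype.sum_of_injective _ DFunLike.coe_injective _ _ (fun g hg =>
            prod_eq_zero_of_not_injective hcol fun hinj =>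
              hg ⟨Equiv.ofBijective g hinj.bijective_of_finite, rfl⟩) fun _ => rfl
      _ = ∏ i, ∑ j, u i j := (Fintype.prod_sum _).symm
      _ = 1 := prod_eq_one fun i _ => (hrow i).complete

theorem sum_permProd_filter (hrow : ∀ i, CompleteOrthogonalIdempotents (u i))
    (hcol : ∀ j, OrthogonalIdempotents (u · j)) (i j : ι) :
    ∑ σ with σ i = j, permProd u σ = u i j := by
  calc ∑ σ with σ i = j, permProd u σ = ∑ σ, u i j * permProd u σ := by
        rw [sum_filter]
        refine sum_congr rfl fun σ _ => ?_
        rw [permProd, ← mul_prod_erase _ _ (mem_univ i), ← mul_assoc, (hrow i).mul_eq]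
        split_ifs <;> simp_all
    _ = u i j := by
        rw [← mul_sum, (completeOrthogonalIdempotents_permProd hrow hcol).complete, mul_one]

end PermProd

section PermCoord

variable (𝕜 : Type*) {ι : Type*} [DecidableEq ι] [CommSemiring 𝕜]

def permCoord (i j : ι) (σ : Equiv.Perm ι) : 𝕜 := if σ i = j then 1 else 0

theorem star_permCoord [StarRing 𝕜] (i j : ι) : star (permCoord 𝕜 i j) = permCoord 𝕜 i j := by
  ext σ; by_cases h : σ i = j <;> simp [permCoord, h]

theorem permCoord_mul_self (i j : ι) : permCoord 𝕜 i j * permCoord 𝕜 i j = permCoord 𝕜 i j := by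
  ext σ; by_cases h : σ i = j <;> simp [permCoord, h]

variable [Fintype ι]

theorem sum_permCoord_right (i : ι) : ∑ j, permCoord 𝕜 i j = 1 := by
  ext σ; simp [permCoord]

theorem sum_permCoord_left (j : ι) : ∑ i, permCoord 𝕜 i j = 1 := by
  ext σ; simp [permCoord, ← Equiv.eq_symm_apply]

theorem permProd_permCoord (σ : Equiv.Perm ι) : permProd (permCoord 𝕜) σ = Pi.single σ 1 := by
  ext τ
  simp [permProd, permCoord, prod_boole, Pi.single_apply, ← Equiv.ext_iff]

variable {𝕜}

theorem StarAlgHom.ext_permCoord {B : Type*} [CommSemiring B] [Algebra 𝕜 B] [Star B] [Star 𝕜]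
    {χ₁ χ₂ : (Equiv.Perm ι → 𝕜) →⋆ₐ[𝕜] B}
    (h : ∀ i j, χ₁ (permCoord 𝕜 i j) = χ₂ (permCoord 𝕜 i j)) : χ₁ = χ₂ := by
  have hsingle (σ : Equiv.Perm ι) : χ₁ (Pi.single σ 1) = χ₂ (Pi.single σ 1) := by
    simp only [← permProd_permCoord, permProd, map_prod, h]
  ext f
  rw [← univ_sum_single f]
  simp only [map_sum]
  refine sum_congr rfl fun σ _ => ?_
  rw [← mul_one (f σ), ← smul_eq_mul, Pi.single_smul', map_smul, map_smul, hsingle]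

end PermCoord

section StarAlgHom

variable {𝕜 ι : Type*} [CommSemiring 𝕜] [StarRing 𝕜] [Fintype ι] [DecidableEq ι]

theorem CompleteOrthogonalIdempotents.piStarAlgHom_permCoord {R : Type*} [CommSemiring R]
    [Algebra 𝕜 R] [StarRing R] [StarModule 𝕜 R] {u : ι → ι → R}
    (hself : ∀ i j, IsSelfAdjoint (u i j)) (hrow : ∀ i, CompleteOrthogonalIdempotents (u i))
    (hcol : ∀ j, OrthogonalIdempotents (u · j)) (i j : ι) :
    (completeOrthogonalIdempotents_permProd hrow hcol).piStarAlgHom (.permProd hself)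
      (permCoord 𝕜 i j) = u i j := by
  rw [← sum_permProd_filter hrow hcol i j, sum_filter]
  exact sum_congr rfl fun σ _ => by by_cases h : σ i = j <;> simp [permCoord, h]

open scoped IsMulCommutative in
/-- Commuting entries generate a commutative star subalgebra, in which the products `permProd`
make sense. -/
theorem exists_starAlgHom_permCoord {A : Type*} [Semiring A] [Algebra 𝕜 A] [StarRing A]
    [StarModule 𝕜 A] {u : ι → ι → A} (hcomm : ∀ i j k l, Commute (u i j) (u k l))
    (hself : ∀ i j, IsSelfAdjoint (u i j)) (hrow : ∀ i, CompleteOrthogonalIdempotents (u i))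
    (hcol : ∀ j, OrthogonalIdempotents (u · j)) :
    ∃ ψ : (Equiv.Perm ι → 𝕜) →⋆ₐ[𝕜] A, ∀ i j, ψ (permCoord 𝕜 i j) = u i j := by
  set S := StarAlgebra.adjoin 𝕜 (Set.range (Function.uncurry u))
  have : IsMulCommutative S := StarAlgebra.isMulCommutative_adjoin 𝕜
    (by rintro _ ⟨⟨i, j⟩, rfl⟩ _ ⟨⟨k, l⟩, rfl⟩; exact hcomm i j k l)
    (by rintro _ ⟨⟨i, j⟩, rfl⟩ _ ⟨⟨k, l⟩, rfl⟩; exact (hself k l).star_eq ▸ hcomm i j k l)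
  let v : ι → ι → S := fun i j => ⟨u i j, StarAlgebra.subset_adjoin _ _ ⟨(i, j), rfl⟩⟩
  have hv : Function.Injective S.subtype := Subtype.val_injective
  have hvself (i j : ι) : IsSelfAdjoint (v i j) := Subtype.ext (hself i j).star_eq
  have hvrow (i : ι) : CompleteOrthogonalIdempotents (v i) :=
    (CompleteOrthogonalIdempotents.map_injective_iff _ hv).mp (hrow i)
  have hvcol (j : ι) : OrthogonalIdempotents (v · j) :=
    (OrthogonalIdempotents.map_injective_iff _ hv).mp (hcol j)
  exact ⟨S.subtype.comp ((completeOrthogonalIdempotents_permProd hvrow hvcol).piStarAlgHom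
    (.permProd hvself)), fun i j => congrArg Subtype.val
      (CompleteOrthogonalIdempotents.piStarAlgHom_permCoord hvself hvrow hvcol i j)⟩

end StarAlgHom

theorem nonempty_starAlgEquiv_pi_perm_of_card_le_three {ι : Type} [Fintype ι] [DecidableEq ι]
    (hι : Fintype.card ι ≤ 3)
    (A : Type) [NormedRing A] [StarRing A] [CStarRing A] [NormedAlgebra ℂ A]
    [StarModule ℂ A] [CompleteSpace A]
    (u : ι → ι → A)
    (hself : ∀ i j, star (u i j) = u i j)
    (hidem : ∀ i j, u i j * u i j = u i j)
    (hrow : ∀ i, ∑ j, u i j = 1)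
    (hcol : ∀ j, ∑ i, u i j = 1)
    (huniv : ∀ (B : Type) [NormedRing B] [StarRing B] [CStarRing B]
      [NormedAlgebra ℂ B] [StarModule ℂ B] [CompleteSpace B]
      (v : ι → ι → B),
        (∀ i j, star (v i j) = v i j) → (∀ i j, v i j * v i j = v i j) →
        (∀ i, ∑ j, v i j = 1) → (∀ j, ∑ i, v i j = 1) →
        ∃! φ : A →⋆ₐ[ℂ] B, ∀ i j, φ (u i j) = v i j) :
    Nonempty (A ≃⋆ₐ[ℂ] (Equiv.Perm ι → ℂ)) := by
  have : IsAddTorsionFree A := .of_isTorsionFree ℂ A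
  have hrow' (i : ι) : CompleteOrthogonalIdempotents (u i) :=
    .of_card_le_three hι (hidem i) (hrow i)
  have hcol' (j : ι) : CompleteOrthogonalIdempotents (u · j) :=
    .of_card_le_three hι (hidem · j) (hcol j)
  obtain ⟨ψ, hψ⟩ := exists_starAlgHom_permCoord (𝕜 := ℂ)
    (commute_of_card_le_three hι hself hrow' hcol') hself hrow'
    fun j => (hcol' j).toOrthogonalIdempotents
  obtain ⟨φ, hφ, -⟩ := huniv _ (permCoord ℂ) (star_permCoord ℂ) (permCoord_mul_self ℂ)
    (sum_permCoord_right ℂ) (sum_permCoord_left ℂ)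
  refine ⟨.ofStarAlgHom φ ψ ?_ (StarAlgHom.ext_permCoord fun i j => by simp [hψ, hφ])⟩
  exact (huniv A u hself hidem hrow hcol).unique (fun i j => by simp [hφ, hψ]) fun _ _ => rfl

/-- For `n ∈ {1,2,3}`, the quantum permutation algebra `A_s(n)` — i.e. any
C*-algebra with a universal family of `n²` projections `u i j` whose rows and
columns sum to `1` — is commutative and isomorphic to `ℂ^{n!}`. -/
theorem quantumPermutationAlgebra_small_n
    (n : ℕ) (hn : n = 1 ∨ n = 2 ∨ n = 3)
    (A : Type) [NormedRing A] [StarRing A] [CStarRing A] [NormedAlgebra ℂ A]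
    [StarModule ℂ A] [CompleteSpace A]
    (u : Fin n → Fin n → A)
    (hself : ∀ i j, star (u i j) = u i j)
    (hidem : ∀ i j, u i j * u i j = u i j)
    (hrow : ∀ i, ∑ j, u i j = 1)
    (hcol : ∀ j, ∑ i, u i j = 1)
    (huniv : ∀ (B : Type) [NormedRing B] [StarRing B] [CStarRing B]
      [NormedAlgebra ℂ B] [StarModule ℂ B] [CompleteSpace B]
      (v : Fin n → Fin n → B),
        (∀ i j, star (v i j) = v i j) → (∀ i j, v i j * v i j = v i j) →
        (∀ i, ∑ j, v i j = 1) → (∀ j, ∑ i, v i j = 1) →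
        ∃! φ : A →⋆ₐ[ℂ] B, ∀ i j, φ (u i j) = v i j) :
    (∀ a b : A, a * b = b * a) ∧
      Nonempty (A ≃⋆ₐ[ℂ] (Fin (Nat.factorial n) → ℂ)) := by
  obtain ⟨E⟩ := nonempty_starAlgEquiv_pi_perm_of_card_le_three
    (by rw [Fintype.card_fin]; omega) A u hself hidem hrow hcol huniv
  let e : Equiv.Perm (Fin n) ≃ Fin (Nat.factorial n) :=
    Fintype.equivFinOfCardEq (by rw [Fintype.card_perm, Fintype.card_fin])
  refine ⟨fun a b => E.injective (by rw [map_mul, map_mul, mul_comm]), ⟨E.trans ?_⟩⟩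
  exact .ofAlgEquiv (AlgEquiv.piCongrLeft' ℂ (fun _ => ℂ) e) fun _ => rfl
end
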